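/- arXiv:2303.07149 — 12 statements merged into one kernel-verified Lean document; each statement's English description precedes it below -/
import Mathlib

section
/- Let a ≥ 2 and let A = (a, b_1, …, b_k) be positive integers with gcd(A) = 1. Then the Sylvester number satisfies n(A) = (1/a)·∑_{r=1}^{a−1} N_r − (a−1)/2. -/
/-!
Bézout's identity for `gcd(a, b₁, …, b_k) = 1` gives, for every residue `r` modulo `a`, a number
`≡ r` representable by the `bᵢ`, so `N_r` is attained. Then `m` is representable by
`(a, b₁, …, b_k)` exactly when `N_{m mod a} ≤ m`, so the non-representable numbers of the
class of `r` are `r, r + a, …, N_r - a`, that is `(N_r - r)/a` of them. Summing over `r`, with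
`N_0 = 0` and `∑ r = a(a-1)/2`, gives the formula.
-/

/-- `m` is representable by the sequence `A`. -/
def IsRepresentable {n : ℕ} (A : Fin n → ℕ) (m : ℕ) : Prop :=
  ∃ x : Fin n → ℕ, m = ∑ i, A i * x i

/-- `N_r`: the least nonnegative integer congruent to `r` modulo `a` that is
representable by `B`. -/
noncomputable def Nres {k : ℕ} (a : ℕ) (B : Fin k → ℕ) (r : ℕ) : ℕ :=
  sInf {m : ℕ | m % a = r ∧ IsRepresentable B m}

open Finset

theorem Finset.natCast_gcd {ι : Type*} (s : Finset ι) (f : ι → ℕ) :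
    ((s.gcd f : ℕ) : ℤ) = s.gcd (fun i => (f i : ℤ)) := by
  induction s using Finset.cons_induction with
  | empty => simp
  | cons i s _ ih => rw [gcd_cons, gcd_cons, ← ih, ← Int.coe_gcd, Int.gcd_natCast_natCast]; rfl

theorem Finset.exists_sum_mul_eq_one_of_gcd_eq_one {ι : Type*} {s : Finset ι} {f : ι → ℕ}
    (h : s.gcd f = 1) : ∃ c : ι → ℤ, ∑ i ∈ s, (f i : ℤ) * c i = 1 := by
  obtain ⟨c, hc⟩ := s.gcd_eq_sum_mul (fun i => (f i : ℤ))
  exact ⟨c, by rw [← hc, ← natCast_gcd, h, Nat.cast_one]⟩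

theorem isRepresentable_cons_iff {k a m : ℕ} {B : Fin k → ℕ} :
    IsRepresentable (Fin.cons a B) m ↔ ∃ t s, IsRepresentable B s ∧ m = a * t + s := by
  constructor
  · rintro ⟨x, rfl⟩
    exact ⟨x 0, _, ⟨Fin.tail x, rfl⟩, by simp [Fin.sum_univ_succ, Fin.tail]⟩
  · rintro ⟨t, s, ⟨y, rfl⟩, rfl⟩
    exact ⟨Fin.cons t y, by simp [Fin.sum_univ_succ]⟩

theorem exists_modEq_isRepresentable {k a : ℕ} [NeZero a] {B : Fin k → ℕ}
    (hgcd : univ.gcd (Fin.cons a B) = 1) (r : ℕ) :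
    ∃ m, m ≡ r [MOD a] ∧ IsRepresentable B m := by
  obtain ⟨c, hc⟩ := exists_sum_mul_eq_one_of_gcd_eq_one hgcd
  rw [Fin.sum_univ_succ] at hc
  -- from `a c₀ + ∑ bᵢ cᵢ₊₁ = 1`, choosing `xᵢ ≡ cᵢ₊₁ r (mod a)` makes `∑ bᵢ xᵢ ≡ r (mod a)`
  let x : Fin k → ℕ := fun i => ((c i.succ * r : ℤ) : ZMod a).val
  refine ⟨∑ i, B i * x i, ?_, x, rfl⟩
  rw [← ZMod.natCast_eq_natCast_iff]
  have hc' := congrArg (fun z : ℤ => ((z * r : ℤ) : ZMod a)) hc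
  simp only [Fin.cons_zero, Fin.cons_succ, add_mul, Finset.sum_mul] at hc'
  push_cast [x, ZMod.natCast_zmod_val, ZMod.natCast_self] at hc' ⊢
  simpa [mul_assoc] using hc'

section Nres

variable {k a : ℕ} {B : Fin k → ℕ}

theorem nres_le {m : ℕ} (h : IsRepresentable B m) : Nres a B (m % a) ≤ m :=
  Nat.sInf_le ⟨rfl, h⟩

theorem nres_mem (ha : a ≠ 0) (hgcd : univ.gcd (Fin.cons a B) = 1) {r : ℕ} (hr : r < a) :
    Nres a B r % a = r ∧ IsRepresentable B (Nres a B r) := by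
  have : NeZero a := ⟨ha⟩
  obtain ⟨m, hm, hrep⟩ := exists_modEq_isRepresentable hgcd r
  exact Nat.sInf_mem (s := {m | m % a = r ∧ IsRepresentable B m})
    ⟨m, Eq.trans hm (Nat.mod_eq_of_lt hr), hrep⟩

theorem nres_zero : Nres a B 0 = 0 :=
  Nat.le_zero.mp (by simpa using nres_le (a := a) (B := B) (m := 0) ⟨0, by simp⟩)

theorem isRepresentable_cons_iff_nres_le (ha : a ≠ 0) (hgcd : univ.gcd (Fin.cons a B) = 1)
    {m : ℕ} : IsRepresentable (Fin.cons a B) m ↔ Nres a B (m % a) ≤ m := by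
  rw [isRepresentable_cons_iff]
  constructor
  · rintro ⟨t, s, hs, rfl⟩
    rw [Nat.mul_add_mod]
    exact (nres_le hs).trans (Nat.le_add_left s _)
  · intro hle
    obtain ⟨hmod, hrep⟩ := nres_mem ha hgcd (Nat.mod_lt m (Nat.pos_of_ne_zero ha))
    obtain ⟨t, ht⟩ := (Nat.modEq_iff_dvd' hle).mp hmod
    exact ⟨t, _, hrep, by omega⟩

end Nres

section Counting

variable {a : ℕ} (ha : 0 < a) (f : ℕ → ℕ) (hf : ∀ r < a, f r % a = r)
include ha hf

theorem ncard_setOf_lt_apply_mod : {m | m < f (m % a)}.ncard = ∑ r ∈ range a, f r / a := by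
  have hS : {m | m < f (m % a)} =
      ↑((range a).biUnion fun r => {m ∈ range (f r) | m ≡ r [MOD a]}) := by
    ext m
    simp only [Set.mem_ofPred_eq, coe_biUnion, coe_range, Set.mem_Iio, coe_filter, mem_range,
      Set.mem_iUnion, exists_prop]
    constructor
    · exact fun hm => ⟨m % a, Nat.mod_lt m ha, hm, (Nat.mod_mod m a).symm⟩
    · rintro ⟨r, hr, hm, hmod⟩
      rwa [hmod, Nat.mod_eq_of_lt hr]
  rw [hS, Set.ncard_coe_finset, card_biUnion]
  · refine sum_congr rfl fun r hr => ?_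
    rw [mem_range] at hr
    rw [← Nat.count_eq_card_filter_range, Nat.count_modEq_card _ ha, Nat.mod_eq_of_lt hr, hf r hr,
      if_neg (lt_irrefl r), add_zero]
  · intro r hr r' hr' hne
    simp only [Function.onFun, disjoint_left, mem_filter, mem_range, coe_range, Set.mem_Iio] at *
    rintro m ⟨-, hm⟩ ⟨-, hm'⟩
    exact hne (by rw [← Nat.mod_eq_of_lt hr, ← Nat.mod_eq_of_lt hr', ← hm, ← hm'])

theorem cast_sum_range_div_eq :
    ((∑ r ∈ range a, f r / a : ℕ) : ℚ) = (1 / a) * ∑ r ∈ range a, (f r : ℚ) - (a - 1) / 2 := by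
  have haQ : (a : ℚ) ≠ 0 := Nat.cast_ne_zero.mpr ha.ne'
  have hquot : ∀ r ∈ range a, ((f r / a : ℕ) : ℚ) = ((f r : ℚ) - r) / a := by
    intro r hr
    have hdiv := Nat.div_add_mod' (f r) a
    rw [hf r (mem_range.1 hr)] at hdiv
    rw [eq_div_iff haQ, eq_sub_iff_add_eq]
    exact_mod_cast hdiv
  have hgauss : (∑ r ∈ range a, (r : ℚ)) * 2 = a * (a - 1) := by
    have h := congrArg (Nat.cast (R := ℚ)) (sum_range_id_mul_two a)
    push_cast [Nat.cast_sub (Nat.one_le_of_lt ha)] at h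
    exact h
  rw [Nat.cast_sum, sum_congr rfl hquot, ← sum_div, sum_sub_distrib]
  field_simp
  linarith

end Counting

theorem stmt_1_general {k : ℕ} (a : ℕ) (ha : 2 ≤ a) (B : Fin k → ℕ)
    (hgcd : Finset.univ.gcd (Fin.cons a B) = 1) :
    (({m : ℕ | ¬ IsRepresentable (Fin.cons a B) m}.ncard : ℚ)) =
      (1 / a) * ∑ r ∈ Finset.Ico 1 a, (Nres a B r : ℚ) - (a - 1) / 2 := by
  have ha0 : 0 < a := by omega
  have hN : ∀ r < a, Nres a B r % a = r := fun r hr => (nres_mem ha0.ne' hgcd hr).1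
  have hS : {m | ¬ IsRepresentable (Fin.cons a B) m} = {m | m < Nres a B (m % a)} := by
    ext m
    simp only [Set.mem_ofPred_eq, isRepresentable_cons_iff_nres_le ha0.ne' hgcd, not_le]
  rw [hS, ncard_setOf_lt_apply_mod ha0 _ hN, cast_sum_range_div_eq ha0 _ hN, range_eq_Ico,
    sum_eq_sum_Ico_succ_bot ha0, nres_zero, Nat.cast_zero, zero_add]

/-- For `A = (a, b₁, …, b_k)` with `gcd(A) = 1` and `a ≥ 2`, the Sylvester
number satisfies `n(A) = (1/a)·∑_{r=1}^{a-1} N_r - (a-1)/2`. -/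
theorem stmt_1 {k : ℕ} (a : ℕ) (ha : 2 ≤ a) (B : Fin k → ℕ)
    (hBpos : ∀ i, 0 < B i)
    (hgcd : Finset.univ.gcd (Fin.cons a B) = 1) :
    (({m : ℕ | ¬ IsRepresentable (Fin.cons a B) m}.ncard : ℚ)) =
      (1 / a) * ∑ r ∈ Finset.Ico 1 a, (Nres a B r : ℚ) - (a - 1) / 2 :=
  stmt_1_general a ha B hgcd
end

section
/- Let a ≥ 2, let k, h, d be positive integers, let b_1, …, b_k be positive integers, suppose gcd(a, d) = 1 and gcd(a, ha+db_1, …, ha+db_k) = 1, and set A = (a, ha+db_1, …, ha+db_k). Then for every residue r with 0 ≤ r ≤ a−1, N_{(dr mod a)} = min{ (x_1 + … + x_k)·ha + (ma + r)·d : m ∈ ℕ, x_1, …, x_k ∈ ℕ with b_1 x_1 + … + b_k x_k = ma + r }. -/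
/-- For `A = (a, ha+db₁, …, ha+db_k)` with `a ≥ 2`, `k, h, d ≥ 1`,
`gcd(a, d) = 1` and `gcd(A) = 1`: for every `0 ≤ r ≤ a-1`,
`N_{(dr mod a)} = min{ (x₁+⋯+x_k)·ha + (ma+r)·d : m, xᵢ ∈ ℕ, ∑ bᵢxᵢ = ma + r }`. -/
theorem stmt_4 {k : ℕ} (hk : 0 < k) (a h d : ℕ) (ha : 2 ≤ a) (hh : 0 < h)
    (hd : 0 < d) (B : Fin k → ℕ) (hBpos : ∀ i, 0 < B i)
    (had : Nat.gcd a d = 1)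
    (hgcd : Finset.univ.gcd (Fin.cons a (fun i => h * a + d * B i)) = 1)
    (r : ℕ) (hr : r ≤ a - 1) :
    Nres a (fun i => h * a + d * B i) (d * r % a) =
      sInf {v : ℕ | ∃ (m : ℕ) (x : Fin k → ℕ),
        (∑ i, B i * x i) = m * a + r ∧
        v = (∑ i, x i) * (h * a) + (m * a + r) * d} := by
  have hra : r < a := by omega
  have key : ∀ x : Fin k → ℕ,
      ∑ i, (h * a + d * B i) * x i = h * a * (∑ i, x i) + d * (∑ i, B i * x i) := by
    intro x
    rw [Finset.mul_sum, Finset.mul_sum, ← Finset.sum_add_distrib]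
    exact Finset.sum_congr rfl fun i _ => by ring
  unfold Nres
  congr 1
  ext v
  simp only [Set.mem_setOf_eq, IsRepresentable]
  constructor
  · rintro ⟨hv, x, hx⟩
    set T := ∑ i, B i * x i with hT
    have hsum : v = h * a * (∑ i, x i) + d * T := by rw [hx, key]
    have h1 : (d * T) % a = (d * r) % a := by
      have h0 : v % a = (d * T) % a := by
        rw [hsum, show h * a * (∑ i, x i) + d * T = a * (h * ∑ i, x i) + d * T by ring,
          Nat.mul_add_mod]
      rw [← h0, hv]
    have h3 : T ≡ r [MOD a] :=
      (Nat.ModEq.cancel_left_of_coprime had) h1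
    have hmod : T % a = r := by
      have h4 : T % a = r % a := h3
      rwa [Nat.mod_eq_of_lt hra] at h4
    have hdm := Nat.div_add_mod T a
    have hcm : T / a * a = a * (T / a) := Nat.mul_comm _ _
    refine ⟨T / a, x, by omega, ?_⟩
    have hTa : T / a * a + r = T := by omega
    rw [hsum, hTa]
    ring
  · rintro ⟨m, x, hmx, hv⟩
    constructor
    · have : v = a * ((∑ i, x i) * h + m * d) + d * r := by rw [hv]; ring
      rw [this, Nat.mul_add_mod]
    · exact ⟨x, by rw [key, hmx, hv]; ring⟩
end

section
/- Let a ≥ 2, let d be a positive integer, and let b_1, …, b_k be positive integers such that gcd(a, db_1, db_2, …, db_k) = 1. Then g(a, db_1, db_2, …, db_k) = d·g(a, b_1, b_2, …, b_k) + (d−1)·a. -/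
lemma rep_cons {k : ℕ} (a : ℕ) (C : Fin k → ℕ) (m : ℕ) :
    IsRepresentable (Fin.cons a C) m ↔
      ∃ x0 : ℕ, ∃ x : Fin k → ℕ, m = a * x0 + ∑ i, C i * x i := by
  constructor
  · rintro ⟨x, rfl⟩
    exact ⟨x 0, fun i => x i.succ, by rw [Fin.sum_univ_succ]; simp⟩
  · rintro ⟨x0, x, rfl⟩
    exact ⟨Fin.cons x0 x, by rw [Fin.sum_univ_succ]; simp⟩

/-- For `a ≥ 2`, `d ≥ 1` and positive `b₁, …, b_k` with
`gcd(a, db₁, …, db_k) = 1`: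
`g(a, db₁, …, db_k) = d·g(a, b₁, …, b_k) + (d-1)·a`. -/
theorem stmt_5 {k : ℕ} (a d : ℕ) (ha : 2 ≤ a) (hd : 0 < d)
    (B : Fin k → ℕ) (hBpos : ∀ i, 0 < B i)
    (hgcd : Finset.univ.gcd (Fin.cons a (fun i => d * B i)) = 1)
    (g₁ g₂ : ℕ)
    (hg₁ : IsGreatest {m : ℕ | ¬ IsRepresentable (Fin.cons a (fun i => d * B i)) m} g₁)
    (hg₂ : IsGreatest {m : ℕ | ¬ IsRepresentable (Fin.cons a B) m} g₂) :
    (g₁ : ℤ) = d * g₂ + (d - 1) * a := by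
  haveI : NeZero d := ⟨hd.ne'⟩
  have had : Nat.Coprime a d := by
    have h1 : Nat.gcd a d ∣ Finset.univ.gcd (Fin.cons a (fun i => d * B i)) := by
      apply Finset.dvd_gcd
      intro i _
      refine Fin.cases ?_ ?_ i
      · simpa using Nat.gcd_dvd_left a d
      · intro j
        simp only [Fin.cons_succ]
        exact dvd_mul_of_dvd_left (Nat.gcd_dvd_right a d) _
    rw [hgcd] at h1
    exact Nat.eq_one_of_dvd_one h1
  set G := d * g₂ + (d - 1) * a with hG
  have hd1 : ((d - 1 : ℕ) : ℤ) = (d : ℤ) - 1 := by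
    rw [Nat.cast_sub hd]; simp
  -- Step A: G is not representable by (a, d*B)
  have hGnr : ¬ IsRepresentable (Fin.cons a (fun i => d * B i)) G := by
    rw [rep_cons]
    rintro ⟨x0, x, hEq⟩
    set u := ∑ i, B i * x i with hu
    have hEq' : G = a * x0 + d * u := by
      rw [hEq, hu, Finset.mul_sum]
      congr 1
      apply Finset.sum_congr rfl
      intro i _
      ring
    have hz : (d : ℤ) * ((g₂ : ℤ) + a) = (a : ℤ) * ((x0 : ℤ) + 1) + d * u := by
      have hc : (G : ℤ) = (a : ℤ) * x0 + (d : ℤ) * u := by exact_mod_cast hEq'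
      rw [hG] at hc
      push_cast [hd1] at hc
      linarith
    have hdvd : (d : ℤ) ∣ (a : ℤ) * ((x0 : ℤ) + 1) := by
      refine ⟨((g₂ : ℤ) + a) - u, ?_⟩
      linarith
    have hco : IsCoprime (d : ℤ) (a : ℤ) := by
      rw [Int.isCoprime_iff_gcd_eq_one]
      simpa [Nat.coprime_comm] using had
    obtain ⟨y, hy⟩ := hco.dvd_of_dvd_mul_left hdvd
    have hy0 : 0 < y := by
      nlinarith [hy, (show (0:ℤ) < (d:ℤ) from by exact_mod_cast hd),
        (show (0:ℤ) ≤ (x0:ℤ) from by positivity)]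
    have hcancel : (g₂ : ℤ) + a = (a : ℤ) * y + u := by
      have hd0 : (d : ℤ) ≠ 0 := by exact_mod_cast hd.ne'
      have : (d : ℤ) * ((g₂ : ℤ) + a) = (d : ℤ) * ((a : ℤ) * y + u) := by
        rw [hz, hy]; ring
      exact mul_left_cancel₀ hd0 this
    have hg2z : (g₂ : ℤ) = (a : ℤ) * ((y - 1 : ℤ).toNat) + u := by
      have h1 : (0 : ℤ) ≤ y - 1 := by omega
      rw [Int.toNat_of_nonneg h1]
      have ha0 : (0:ℤ) < (a:ℤ) := by exact_mod_cast (by omega : 0 < a)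
      nlinarith [hcancel]
    have hg2n : g₂ = a * ((y - 1 : ℤ).toNat) + u := by exact_mod_cast hg2z
    exact hg₂.1 ((rep_cons a B g₂).mpr ⟨_, x, hg2n⟩)
  -- Step B: g₁ ≤ G, since everything above G is representable
  have hle : g₁ ≤ G := by
    by_contra hcon
    push_neg at hcon
    apply hg₁.1
    rw [rep_cons]
    set x := ((g₁ : ZMod d) * (a : ZMod d)⁻¹).val with hxdef
    have hxlt : x < d := ZMod.val_lt _
    have hmod : a * x ≡ g₁ [MOD d] := by
      rw [← ZMod.natCast_eq_natCast_iff]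
      push_cast
      rw [hxdef]
      simp only [ZMod.natCast_val, ZMod.cast_id]
      rw [show (a : ZMod d) * ((g₁ : ZMod d) * (a : ZMod d)⁻¹)
            = (g₁ : ZMod d) * ((a : ZMod d) * (a : ZMod d)⁻¹) by ring,
        ZMod.coe_mul_inv_eq_one a had, mul_one]
    have haxle : a * x ≤ g₁ := by
      calc a * x ≤ a * (d - 1) := Nat.mul_le_mul_left _ (by omega)
        _ = (d - 1) * a := mul_comm _ _
        _ ≤ G := Nat.le_add_left _ _
        _ ≤ g₁ := hcon.le
    obtain ⟨t, ht⟩ := (Nat.modEq_iff_dvd' haxle).mp hmod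
    have hg1eq : g₁ = a * x + d * t := by
      have h1 : a * x ≤ g₁ := haxle
      omega
    have hax2 : a * x ≤ (d - 1) * a := by
      rw [mul_comm]; exact Nat.mul_le_mul_right _ (by omega)
    have hg2t : g₂ < t := by
      have h1 : d * g₂ + (d - 1) * a < d * t + (d - 1) * a := by
        calc d * g₂ + (d - 1) * a < g₁ := hcon
          _ = a * x + d * t := hg1eq
          _ ≤ (d - 1) * a + d * t := Nat.add_le_add_right hax2 _
          _ = d * t + (d - 1) * a := Nat.add_comm _ _
      exact Nat.lt_of_mul_lt_mul_left (Nat.lt_of_add_lt_add_right h1)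
    have htrep : IsRepresentable (Fin.cons a B) t := by
      by_contra hnt
      exact absurd (hg₂.2 hnt) (not_le.mpr hg2t)
    obtain ⟨y, z, hty⟩ := (rep_cons a B t).mp htrep
    refine ⟨x + d * y, z, ?_⟩
    have hsum : ∑ i, d * B i * z i = d * ∑ i, B i * z i := by
      rw [Finset.mul_sum]
      exact Finset.sum_congr rfl fun i _ => by ring
    rw [hsum, hg1eq, hty]
    ring
  have hge : G ≤ g₁ := hg₁.2 hGnr
  have : g₁ = G := le_antisymm hle hge
  rw [this, hG]
  push_cast [hd1]
  ring
end

section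
/- Let A = (a, ha+d, ha+jd) with a, j > 2, h ≥ d ≥ 1, gcd(a, d) = 1, and write a = kj − t with k ≥ 1 and 0 ≤ t ≤ j−1. Then: if t = 0, g(A) = ha²/j + (j−2)ha + (a−1)d − a; if t = 1, g(A) = ha(a+1)/j + (j−3)ha + (a−1)d − a; and if 2 ≤ t ≤ j−1 and hk + d − ht ≥ 0, then g(A) = ⌊a/j⌋·(ha+jd) + (j−2)ha − d − a. -/
namespace FrobeniusTriple

def minCoins (j n : ℕ) : ℕ := n % j + n / j

def cost (a j h d n : ℕ) : ℕ := h * a * minCoins j n + d * n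

section minCoins

variable {j : ℕ}

lemma minCoins_of_lt {n : ℕ} (hn : n < j) : minCoins j n = n := by
  simp [minCoins, Nat.mod_eq_of_lt hn, Nat.div_eq_of_lt hn]

lemma minCoins_add_mul (hj : 0 < j) (n q : ℕ) : minCoins j (n + j * q) = minCoins j n + q := by
  simp only [minCoins, Nat.add_mul_mod_self_left, Nat.add_mul_div_left _ _ hj]
  omega

lemma minCoins_le_self (n : ℕ) : minCoins j n ≤ n := by
  have := Nat.mod_add_div n j
  have : n / j ≤ j * (n / j) := by
    rcases Nat.eq_zero_or_pos j with rfl | hj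
    · simp
    · exact Nat.le_mul_of_pos_left _ hj
  unfold minCoins; omega

lemma minCoins_add_of_mod_eq_zero (hj : 0 < j) (m : ℕ) {n : ℕ} (hn : n % j = 0) :
    minCoins j (m + n) = minCoins j m + minCoins j n := by
  obtain ⟨q, rfl⟩ := Nat.dvd_of_mod_eq_zero hn
  have hq : minCoins j (j * q) = q := by simpa [minCoins_of_lt hj] using minCoins_add_mul hj 0 q
  rw [minCoins_add_mul hj, hq]

lemma minCoins_add_le (hj : 0 < j) (m n : ℕ) :
    minCoins j m + minCoins j n ≤ minCoins j (m + n) + (j - 1) := by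
  have hsplit : m + n = (m % j + n % j) + j * (m / j + n / j) := by
    have := Nat.mod_add_div m j; have := Nat.mod_add_div n j; rw [mul_add]; omega
  have hm := Nat.mod_lt m hj
  have hn := Nat.mod_lt n hj
  rw [hsplit, minCoins_add_mul hj]
  rcases lt_or_ge (m % j + n % j) j with hlt | hge
  · rw [minCoins_of_lt hlt]; unfold minCoins; omega
  · obtain ⟨r, hr⟩ : ∃ r, m % j + n % j = r + j * 1 := ⟨m % j + n % j - j, by omega⟩
    rw [hr, minCoins_add_mul hj, minCoins_of_lt (n := r) (by omega)]; unfold minCoins; omega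

lemma minCoins_le_minCoins (hj : 0 < j) {s S : ℕ} (hsS : s ≤ S) (hS : j - 2 ≤ S % j) :
    minCoins j s ≤ minCoins j S := by
  have hs := Nat.mod_add_div s j
  have hS' := Nat.mod_add_div S j
  have hdiv : s / j ≤ S / j := Nat.div_le_div_right hsS
  have := Nat.mod_lt s hj
  unfold minCoins
  rcases hdiv.eq_or_lt with heq | hlt
  · rw [heq] at hs ⊢; omega
  · omega

end minCoins

section cost

variable {a j h d : ℕ}

lemma cost_mono {s S : ℕ} (hsS : s ≤ S) (hu : minCoins j s ≤ minCoins j S) :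
    cost a j h d s ≤ cost a j h d S := by
  unfold cost; gcongr

lemma cost_modEq (n : ℕ) : cost a j h d n ≡ d * n [MOD a] := by
  rw [cost, mul_comm h, mul_assoc, Nat.ModEq, Nat.mul_add_mod]

lemma cost_le_cost_add (hj : 0 < j) (hcond : a % j ≠ 0 → h * (j - 1) ≤ h * minCoins j a + d)
    (n : ℕ) : cost a j h d n ≤ cost a j h d (n + a) := by
  by_cases ha : a % j = 0
  · exact cost_mono (by omega) (by rw [minCoins_add_of_mod_eq_zero hj n ha]; omega)
  · have hadd := Nat.mul_le_mul_left (h * a) (minCoins_add_le hj n a)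
    have hc := Nat.mul_le_mul_left a (hcond ha)
    unfold cost
    nlinarith

lemma isRepresentable_iff (hj : 0 < j) {m : ℕ} :
    IsRepresentable ![a, h * a + d, h * a + j * d] m ↔ ∃ n x, m = cost a j h d n + a * x := by
  simp only [IsRepresentable, Fin.sum_univ_three, Matrix.cons_val_zero, Matrix.cons_val_one,
    Matrix.cons_val_two, Matrix.tail_cons, Matrix.head_cons]
  constructor
  · rintro ⟨x, rfl⟩
    obtain ⟨e, he⟩ : ∃ e, x 1 + x 2 = minCoins j (x 1 + j * x 2) + e := by
      have := minCoins_le_self (j := j) (x 1)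
      exact ⟨x 1 - minCoins j (x 1), by rw [minCoins_add_mul hj]; omega⟩
    refine ⟨x 1 + j * x 2, x 0 + h * e, ?_⟩
    unfold cost
    linear_combination h * a * he
  · rintro ⟨n, x, rfl⟩
    refine ⟨![x, n % j, n / j], ?_⟩
    simp only [Matrix.cons_val_zero, Matrix.cons_val_one, Matrix.cons_val_two, Matrix.tail_cons,
      Matrix.head_cons, cost, minCoins]
    linear_combination d * (Nat.mod_add_div n j).symm

lemma exists_cost_modEq (ha : 0 < a) (had : Nat.Coprime a d) (m : ℕ) :
    ∃ s < a, cost a j h d s ≡ m [MOD a] := by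
  obtain ⟨s, hs, hmod⟩ := Nat.exists_mul_mod_eq_of_coprime m had.symm ha.ne'
  exact ⟨s, hs, (cost_modEq s).trans hmod⟩

lemma isRepresentable_of_lt (hj : 0 < j) (ha : 0 < a) (had : Nat.Coprime a d) {C m : ℕ}
    (hC : ∀ s < a, cost a j h d s ≤ C) (hm : C < m + a) :
    IsRepresentable ![a, h * a + d, h * a + j * d] m := by
  obtain ⟨s, hs, hmod⟩ := exists_cost_modEq (j := j) (h := h) ha had m
  have hle : cost a j h d s ≤ m := by
    by_contra hlt
    have hdvd : a ∣ cost a j h d s - m := (Nat.modEq_iff_dvd' (by omega)).1 hmod.symm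
    have := Nat.le_of_dvd (by omega) hdvd
    have := hC s hs
    omega
  obtain ⟨x, hx⟩ := (Nat.modEq_iff_dvd' hle).1 hmod
  exact (isRepresentable_iff hj).2 ⟨s, x, by omega⟩

lemma not_isRepresentable_of_add_eq (hj : 0 < j) (had : Nat.Coprime a d)
    (hstep : ∀ n, cost a j h d n ≤ cost a j h d (n + a)) {S N : ℕ} (hS : S < a)
    (hN : N + a = cost a j h d S) : ¬ IsRepresentable ![a, h * a + d, h * a + j * d] N := by
  rw [isRepresentable_iff hj]
  rintro ⟨n, x, rfl⟩
  have hdn : d * n ≡ d * S [MOD a] := calc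
    d * n ≡ cost a j h d n [MOD a] := (cost_modEq n).symm
    _ ≡ cost a j h d n + a * x + a [MOD a] := by simp [Nat.ModEq]
    _ = cost a j h d S := hN
    _ ≡ d * S [MOD a] := cost_modEq S
  have hnS : n % a = S := by
    have := Nat.ModEq.cancel_left_of_coprime had hdn
    rwa [Nat.ModEq, Nat.mod_eq_of_lt hS] at this
  have hprog : Monotone fun q => cost a j h d (S + a * q) := monotone_nat_of_le_succ fun q => by
    simpa [mul_add, add_assoc] using hstep (S + a * q)
  have : cost a j h d S ≤ cost a j h d n := by
    simpa [← hnS, Nat.mod_add_div] using hprog (Nat.zero_le (n / a))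
  omega

theorem add_eq_cost_of_isGreatest (hj : 0 < j) (ha : 0 < a) (had : Nat.Coprime a d)
    (hstep : ∀ n, cost a j h d n ≤ cost a j h d (n + a)) {S : ℕ} (hS : S < a)
    (hmax : ∀ s < a, cost a j h d s ≤ cost a j h d S) {g : ℕ}
    (hg : IsGreatest {m | ¬ IsRepresentable ![a, h * a + d, h * a + j * d] m} g) :
    g + a = cost a j h d S := by
  have hupper : g + a ≤ cost a j h d S := by
    by_contra hlt
    exact hg.1 (isRepresentable_of_lt hj ha had hmax (by omega))
  have hlower : cost a j h d S - a ≤ g :=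
    hg.2 (not_isRepresentable_of_add_eq hj had hstep hS (by omega))
  omega

lemma add_eq_cost_sub_one (hj : 0 < j) (ha : 0 < a) (had : Nat.Coprime a d)
    (hstep : ∀ n, cost a j h d n ≤ cost a j h d (n + a)) (hpred : j - 2 ≤ (a - 1) % j) {g : ℕ}
    (hg : IsGreatest {m | ¬ IsRepresentable ![a, h * a + d, h * a + j * d] m} g) :
    g + a = cost a j h d (a - 1) :=
  add_eq_cost_of_isGreatest hj ha had hstep (by omega)
    (fun _ hs => cost_mono (by omega) (minCoins_le_minCoins hj (by omega) hpred)) hg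

theorem frobenius_of_dvd (hj : 0 < j) (ha : 0 < a) (had : Nat.Coprime a d) (hdvd : j ∣ a)
    {g : ℕ} (hg : IsGreatest {m | ¬ IsRepresentable ![a, h * a + d, h * a + j * d] m} g) :
    (g : ℚ) = h * a ^ 2 / j + ((j : ℚ) - 2) * h * a + ((a : ℚ) - 1) * d - a := by
  obtain ⟨k, hk⟩ := hdvd
  obtain ⟨k, rfl⟩ := Nat.exists_eq_add_one_of_ne_zero (n := k) (by rintro rfl; omega)
  have hpred : a - 1 = (j - 1) + j * k := by rw [mul_add_one] at hk; omega
  have hu : minCoins j (a - 1) = (j - 1) + k := by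
    rw [hpred, minCoins_add_mul hj, minCoins_of_lt (by omega)]
  have hmod : a % j = 0 := by simp [hk]
  have hstep : ∀ n, cost a j h d n ≤ cost a j h d (n + a) :=
    cost_le_cost_add hj fun hne => (hne hmod).elim
  have hres : j - 2 ≤ (a - 1) % j := by
    rw [hpred, Nat.add_mul_mod_self_left, Nat.mod_eq_of_lt (by omega)]; omega
  have hcost := add_eq_cost_sub_one hj ha had hstep hres hg
  rw [cost, hu] at hcost
  qify [hj, ha] at hcost hk
  rw [hk] at hcost ⊢
  field_simp
  linear_combination hcost

theorem frobenius_of_dvd_add_one (hj : 2 ≤ j) (ha : 0 < a) (had : Nat.Coprime a d)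
    (hdvd : j ∣ a + 1) {g : ℕ}
    (hg : IsGreatest {m | ¬ IsRepresentable ![a, h * a + d, h * a + j * d] m} g) :
    (g : ℚ) = h * a * ((a : ℚ) + 1) / j + ((j : ℚ) - 3) * h * a + ((a : ℚ) - 1) * d - a := by
  obtain ⟨k, hk⟩ := hdvd
  obtain ⟨k, rfl⟩ := Nat.exists_eq_add_one_of_ne_zero (n := k) (by rintro rfl; omega)
  rw [mul_add_one] at hk
  have hj0 : 0 < j := by omega
  have hu : minCoins j a = (j - 1) + k := by
    rw [show a = (j - 1) + j * k by omega, minCoins_add_mul hj0, minCoins_of_lt (by omega)]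
  have hpred : a - 1 = (j - 2) + j * k := by omega
  have hu' : minCoins j (a - 1) = (j - 2) + k := by
    rw [hpred, minCoins_add_mul hj0, minCoins_of_lt (by omega)]
  have hstep : ∀ n, cost a j h d n ≤ cost a j h d (n + a) :=
    cost_le_cost_add hj0 fun _ => by rw [hu]; nlinarith
  have hres : j - 2 ≤ (a - 1) % j := by
    rw [hpred, Nat.add_mul_mod_self_left, Nat.mod_eq_of_lt (by omega)]
  have hcost := add_eq_cost_sub_one hj0 ha had hstep hres hg
  rw [cost, hu'] at hcost
  qify [hj, ha] at hcost hk
  rw [show (a : ℚ) = j * k + j - 1 by linarith] at hcost ⊢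
  field_simp
  linear_combination (j : ℚ) * hcost

lemma cost_add_mul_succ_le (hj : 0 < j) (hdh : d ≤ h) {p r : ℕ} (hrj : r + 3 ≤ j) (hra : r < a) :
    cost a j h d (r + j * (p + 1)) ≤ cost a j h d ((j - 1) + j * p) := by
  unfold cost
  rw [minCoins_add_mul hj, minCoins_add_mul hj, minCoins_of_lt (by omega),
    minCoins_of_lt (by omega)]
  obtain ⟨e, rfl⟩ : ∃ e, j = r + 3 + e := ⟨j - (r + 3), by omega⟩
  rw [show r + 3 + e - 1 = r + 2 + e by omega]
  have hra' : r + 1 ≤ a := hra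
  nlinarith [Nat.mul_le_mul hdh hra', Nat.zero_le (h * a * e)]

lemma cost_le_cost_of_two_le_deficit (hj : 0 < j) (hdh : d ≤ h) {t p : ℕ} (ht : 2 ≤ t)
    (htj : t < j) (hat : a + t = j * (p + 2)) :
    ∀ s < a, cost a j h d s ≤ cost a j h d ((j - 1) + j * p) := by
  intro s hs
  have hmul1 : j * (p + 1) = j * p + j := mul_add_one j p
  have hmul2 : j * (p + 2) = j * p + 2 * j := by ring
  by_cases hsS : s ≤ (j - 1) + j * p
  · refine cost_mono hsS (minCoins_le_minCoins hj hsS ?_)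
    rw [Nat.add_mul_mod_self_left, Nat.mod_eq_of_lt (by omega)]
    omega
  · have := cost_add_mul_succ_le (a := a) (h := h) (p := p) (r := s - j * (p + 1)) hj hdh
      (by omega) (by omega)
    rwa [Nat.sub_add_cancel (by omega)] at this

theorem frobenius_of_two_le_deficit (hj : 0 < j) (ha : 0 < a) (had : Nat.Coprime a d)
    (hdh : d ≤ h) {t k : ℕ} (ht : 2 ≤ t) (htj : t < j) (hk : 2 ≤ k) (hakt : a + t = k * j)
    (htk : h * t ≤ h * k + d) {g : ℕ}
    (hg : IsGreatest {m | ¬ IsRepresentable ![a, h * a + d, h * a + j * d] m} g) :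
    (g : ℚ) = ((a / j : ℕ) : ℚ) * (h * a + j * d) + ((j : ℚ) - 2) * h * a - d - a := by
  obtain ⟨p, rfl⟩ : ∃ p, k = p + 2 := ⟨k - 2, by omega⟩
  rw [mul_comm] at hakt
  have hmul2 : j * (p + 2) = j * p + 2 * j := by ring
  have hat : a = (j - t) + j * (p + 1) := by rw [mul_add_one]; omega
  have hdiv : a / j = p + 1 := by
    rw [hat, Nat.add_mul_div_left _ _ hj, Nat.div_eq_of_lt (by omega), zero_add]
  have hstep : ∀ n, cost a j h d n ≤ cost a j h d (n + a) := by
    refine cost_le_cost_add hj fun _ => ?_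
    rw [hat, minCoins_add_mul hj, minCoins_of_lt (by omega)]
    zify [htj.le, hj] at htk ⊢
    nlinarith
  have hcost := add_eq_cost_of_isGreatest hj ha had hstep (by omega)
    (cost_le_cost_of_two_le_deficit hj hdh ht htj hakt) hg
  rw [cost, minCoins_add_mul hj, minCoins_of_lt (by omega)] at hcost
  rw [hdiv]
  qify [hj] at hcost
  push_cast
  linear_combination hcost

theorem frobenius_of_two_le_deficit_of_add_eq (ha : 0 < a) (had : Nat.Coprime a d) (hdh : d ≤ h)
    {t : ℕ} (ht : 2 ≤ t) (hat : a + t = j) (htk : h * t ≤ h + d) {g : ℕ}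
    (hg : IsGreatest {m | ¬ IsRepresentable ![a, h * a + d, h * a + j * d] m} g) :
    (g : ℚ) = ((a / j : ℕ) : ℚ) * (h * a + j * d) + ((j : ℚ) - 2) * h * a - d - a := by
  have hj : 0 < j := by omega
  have hd : (d : ℚ) = h * (t - 1) := by
    have htk' : (h : ℚ) * t ≤ h + d := by exact_mod_cast htk
    have hdh' : (d : ℚ) ≤ h := by exact_mod_cast hdh
    have ht' : (2 : ℚ) ≤ t := by exact_mod_cast ht
    nlinarith [(Nat.cast_nonneg h : (0 : ℚ) ≤ h)]
  have hstep : ∀ n, cost a j h d n ≤ cost a j h d (n + a) := by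
    refine cost_le_cost_add hj fun _ => ?_
    rw [minCoins_of_lt (by omega)]
    zify [hj] at htk hdh ⊢
    nlinarith
  have hmax : ∀ s < a, cost a j h d s ≤ cost a j h d (a - 1) := fun s hs => by
    refine cost_mono (by omega) ?_
    rw [minCoins_of_lt (by omega), minCoins_of_lt (by omega)]
    omega
  have hcost := add_eq_cost_of_isGreatest hj ha had hstep (by omega) hmax hg
  rw [cost, minCoins_of_lt (by omega)] at hcost
  rw [Nat.div_eq_of_lt (by omega)]
  qify [ha] at hcost
  rw [← hat]
  push_cast
  rw [hd] at hcost ⊢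
  linear_combination hcost

end cost

end FrobeniusTriple

open FrobeniusTriple

theorem stmt_7_general (a j h d k t : ℕ) (ha : 2 < a) (hj : 2 < j)
    (hdh : d ≤ h) (had : Nat.gcd a d = 1) (hk : 1 ≤ k) (ht : t ≤ j - 1)
    (hakt : a + t = k * j)
    (g : ℕ)
    (hg : IsGreatest {m : ℕ | ¬ IsRepresentable ![a, h * a + d, h * a + j * d] m} g) :
    (t = 0 →
      (g : ℚ) = h * a ^ 2 / j + ((j : ℚ) - 2) * h * a + ((a : ℚ) - 1) * d - a) ∧
    (t = 1 →
      (g : ℚ) = h * a * ((a : ℚ) + 1) / j + ((j : ℚ) - 3) * h * a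
        + ((a : ℚ) - 1) * d - a) ∧
    (2 ≤ t → h * t ≤ h * k + d →
      (g : ℚ) = ((a / j : ℕ) : ℚ) * (h * a + j * d)
        + ((j : ℚ) - 2) * h * a - d - a) := by
  refine ⟨fun ht0 => ?_, fun ht1 => ?_, fun ht2 htk => ?_⟩
  · exact frobenius_of_dvd (by omega) (by omega) had ⟨k, by rw [mul_comm]; omega⟩ hg
  · exact frobenius_of_dvd_add_one hj.le (by omega) had ⟨k, by rw [mul_comm]; omega⟩ hg
  · rcases hk.eq_or_lt with rfl | hk2
    · exact frobenius_of_two_le_deficit_of_add_eq (by omega) had hdh ht2 (by omega)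
        (by simpa using htk) hg
    · exact frobenius_of_two_le_deficit (by omega) (by omega) had hdh ht2 (by omega) hk2 hakt
        htk hg

/-- Frobenius formula for `A = (a, ha+d, ha+jd)` with `a, j > 2`, `h ≥ d ≥ 1`,
`gcd(a, d) = 1` and `a = kj - t`, `k ≥ 1`, `0 ≤ t ≤ j-1`. -/
theorem stmt_7 (a j h d k t : ℕ) (ha : 2 < a) (hj : 2 < j) (hd : 0 < d)
    (hdh : d ≤ h) (had : Nat.gcd a d = 1) (hk : 1 ≤ k) (ht : t ≤ j - 1)
    (hakt : a + t = k * j)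
    (g : ℕ)
    (hg : IsGreatest {m : ℕ | ¬ IsRepresentable ![a, h * a + d, h * a + j * d] m} g) :
    (t = 0 →
      (g : ℚ) = h * a ^ 2 / j + ((j : ℚ) - 2) * h * a + ((a : ℚ) - 1) * d - a) ∧
    (t = 1 →
      (g : ℚ) = h * a * ((a : ℚ) + 1) / j + ((j : ℚ) - 3) * h * a
        + ((a : ℚ) - 1) * d - a) ∧
    (2 ≤ t → h * t ≤ h * k + d →
      (g : ℚ) = ((a / j : ℕ) : ℚ) * (h * a + j * d)
        + ((j : ℚ) - 2) * h * a - d - a) :=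
  stmt_7_general a j h d k t ha hj hdh had hk ht hakt g hg
end

section
/- Let A = (a, ha+d, ha+jd) with a, j > 2, h ≥ d ≥ 1, gcd(a, d) = 1, write a = kj − t with k ≥ 1 and 0 ≤ t ≤ j−1, and assume hk + d − ht ≥ 0. Then the Sylvester number satisfies n(A) = (a−1)(ha+d−1)/2 − (h(j−1)(a−t)/2)·((a+t)/j − 1). -/
open Finset

/-- Selmer's formula: `w 0, …, w (a - 1)` is the Apéry set of `a` in the semigroup `{m | P m}`. -/
theorem ncard_setOf_not_eq_sum_div {P : ℕ → Prop} {w : ℕ → ℕ} {a : ℕ} (ha : 0 < a)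
    (hinj : Set.InjOn (fun s => w s % a) (range a))
    (hP : ∀ m, P m ↔ ∃ s < a, w s ≤ m ∧ w s ≡ m [MOD a]) :
    {m | ¬ P m}.ncard = ∑ s ∈ range a, w s / a := by
  have hsurj : Set.SurjOn (fun s => w s % a) (range a) (range a) :=
    surjOn_of_injOn_of_card_le _ (fun s _ => mem_range.2 (Nat.mod_lt _ ha)) hinj le_rfl
  have hgaps : {m | ¬ P m} = ((range a).sigma fun s => range (w s / a)).image
      (fun p => w p.1 % a + a * p.2) := by
    ext m
    simp only [Set.mem_ofPred_eq, hP, not_exists, not_and, coe_image, coe_sigma, Set.mem_image,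
      Set.mem_sigma_iff, mem_coe, mem_range, Sigma.exists]
    constructor
    · intro hgap
      obtain ⟨s, hs, hres⟩ := hsurj (mem_range.2 (Nat.mod_lt m ha))
      have hlt : m < w s := lt_of_not_ge fun hle => hgap s (mem_range.1 hs) hle hres
      refine ⟨s, m / a, ⟨mem_range.1 hs, ?_⟩, ?_⟩
      · have := Nat.mod_add_div m a
        have := Nat.mod_add_div (w s) a
        exact Nat.lt_of_mul_lt_mul_left (a := a) (by simp only at hres; omega)
      · simp only at hres
        rw [hres, Nat.mod_add_div]
    · rintro ⟨s, i, ⟨hs, hi⟩, rfl⟩ s' hs' hle hmod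
      have hres : w s' % a = w s % a := by
        rw [hmod, Nat.add_mul_mod_self_left, Nat.mod_mod]
      obtain rfl := hinj (mem_range.2 hs') (mem_range.2 hs) hres
      have := Nat.mod_add_div (w s') a
      have := Nat.mul_le_mul_left a (Nat.succ_le_of_lt hi)
      rw [Nat.mul_succ] at this
      omega
  rw [hgaps, Set.ncard_coe_finset, card_image_of_injOn, card_sigma]
  · simp only [card_range]
  · rintro ⟨s, i⟩ hsi ⟨s', i'⟩ hsi' heq
    simp only [coe_sigma, Set.mem_sigma_iff, mem_coe, mem_range] at hsi hsi' heq
    have hres : w s % a = w s' % a := by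
      simpa [Nat.add_mul_mod_self_left] using congrArg (· % a) heq
    obtain rfl := hinj (mem_range.2 hsi.1) (mem_range.2 hsi'.1) hres
    obtain rfl : i = i' := Nat.eq_of_mul_eq_mul_left ha (by omega)
    rfl

theorem Nat.injOn_mul_mod_range {a d : ℕ} (had : Nat.Coprime a d) :
    Set.InjOn (fun s => s * d % a) (range a) := fun _ hs _ hs' h =>
  (Nat.ModEq.cancel_right_of_coprime had h).eq_of_lt_of_lt (mem_range.1 hs) (mem_range.1 hs')

theorem Nat.sum_range_mul_mod {a d : ℕ} (had : Nat.Coprime a d) :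
    ∑ s ∈ range a, s * d % a = ∑ s ∈ range a, s := by
  rcases a.eq_zero_or_pos with rfl | ha
  · rfl
  have hmaps : Set.MapsTo (fun s => s * d % a) (range a) (range a) :=
    fun s _ => mem_range.2 (Nat.mod_lt _ ha)
  exact sum_nbij (fun s => s * d % a) hmaps (Nat.injOn_mul_mod_range had)
    (surjOn_of_injOn_of_card_le _ hmaps (Nat.injOn_mul_mod_range had) le_rfl) fun _ _ => rfl

theorem Nat.sum_range_mul_div_mul_two_add {a d : ℕ} (had : Nat.Coprime a d) :
    (∑ s ∈ range a, s * d / a) * 2 + (a - 1) = (a - 1) * d := by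
  rcases a.eq_zero_or_pos with rfl | ha
  · simp
  have hsplit : d * ∑ s ∈ range a, s = a * ∑ s ∈ range a, s * d / a + ∑ s ∈ range a, s := by
    rw [mul_sum, mul_sum, ← Nat.sum_range_mul_mod had, ← sum_add_distrib]
    exact sum_congr rfl fun s _ => by rw [mul_comm d s, Nat.div_add_mod]
  have hid := sum_range_id_mul_two a
  refine Nat.eq_of_mul_eq_mul_left ha ?_
  calc a * ((∑ s ∈ range a, s * d / a) * 2 + (a - 1))
      = a * (∑ s ∈ range a, s * d / a) * 2 + (∑ s ∈ range a, s) * 2 := by rw [hid]; ring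
    _ = d * ((∑ s ∈ range a, s) * 2) := by rw [← mul_assoc d, hsplit]; ring
    _ = a * ((a - 1) * d) := by rw [hid]; ring

theorem Nat.sum_range_mul_div (j k : ℕ) : ∑ s ∈ range (k * j), s / j = j * ∑ i ∈ range k, i := by
  induction k with
  | zero => simp
  | succ k ih =>
    have hblock : ∀ x ∈ range j, (k * j + x) / j = k := fun x hx =>
      Nat.div_eq_of_lt_le (by omega)
        (by rw [add_one_mul]; exact Nat.add_lt_add_left (mem_range.1 hx) _)
    rw [add_one_mul, sum_range_add, ih, sum_congr rfl hblock, sum_range_succ]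
    simp only [sum_const, card_range, smul_eq_mul]
    ring

theorem Nat.sum_range_div_add_mul {a j k t : ℕ} (hakt : a + t = k * j) (ht : t ≤ j) :
    ∑ s ∈ range a, s / j + t * (k - 1) = j * ∑ i ∈ range k, i := by
  have hlast : ∀ x ∈ range t, (a + x) / j = k - 1 := by
    intro x hx
    have hx := mem_range.1 hx
    obtain ⟨k, rfl⟩ : ∃ k', k = k' + 1 := Nat.exists_eq_succ_of_ne_zero (by rintro rfl; omega)
    rw [Nat.add_sub_cancel]
    exact Nat.div_eq_of_lt_le (by rw [add_one_mul] at hakt; omega) (by omega)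
  rw [← Nat.sum_range_mul_div, ← hakt, sum_range_add, sum_congr rfl hlast, sum_const, card_range,
    smul_eq_mul]

theorem Nat.mod_add_div_le_of_add_mul_eq {j s y z : ℕ} (hj : 0 < j) (hs : y + j * z = s) :
    s % j + s / j ≤ y + z := by
  have hz : z ≤ s / j := (Nat.le_div_iff_mul_le hj).2 (by rw [← hs, mul_comm]; omega)
  have := Nat.mod_add_div s j
  nlinarith

section ThreeGenerators

variable {a j h d : ℕ}

-- `Y (ha + d) + Z (ha + jd)` with `Y + jZ = s` and `Y + Z` minimal; for `s < a` these are the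
-- elements of the Apéry set of `a`, one in each residue class `s * d` mod `a`.
variable (a j h d) in
def aperyElt (s : ℕ) : ℕ := s % j * (h * a + d) + s / j * (h * a + j * d)

theorem aperyElt_eq (s : ℕ) : aperyElt a j h d s = h * (s % j + s / j) * a + s * d := by
  calc aperyElt a j h d s = h * (s % j + s / j) * a + (s % j + j * (s / j)) * d := by
        unfold aperyElt; ring
    _ = _ := by rw [Nat.mod_add_div]

theorem aperyElt_modEq (s : ℕ) : aperyElt a j h d s ≡ s * d [MOD a] := by
  rw [aperyElt_eq, Nat.ModEq, Nat.mul_add_mod_self_right]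

theorem isRepresentable_iff_exists_aperyElt_add (hj : 0 < j) (m : ℕ) :
    IsRepresentable ![a, h * a + d, h * a + j * d] m ↔ ∃ s q, m = aperyElt a j h d s + a * q := by
  constructor
  · rintro ⟨x, rfl⟩
    obtain ⟨c, hc⟩ := Nat.exists_eq_add_of_le
      (Nat.mod_add_div_le_of_add_mul_eq hj (rfl : x 1 + j * x 2 = _))
    refine ⟨x 1 + j * x 2, x 0 + h * c, ?_⟩
    rw [aperyElt_eq, Fin.sum_univ_three]
    simp only [Matrix.cons_val_zero, Matrix.cons_val_one, Matrix.cons_val_two, Matrix.head_cons,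
      Matrix.tail_cons]
    calc a * x 0 + (h * a + d) * x 1 + (h * a + j * d) * x 2
        = h * (x 1 + x 2) * a + (x 1 + j * x 2) * d + a * x 0 := by ring
      _ = _ := by rw [hc]; ring
  · rintro ⟨s, q, rfl⟩
    refine ⟨![q, s % j, s / j], ?_⟩
    simp only [aperyElt, Fin.sum_univ_three, Matrix.cons_val_zero, Matrix.cons_val_one,
      Matrix.cons_val_two, Matrix.head_cons, Matrix.tail_cons]
    ring

theorem aperyElt_le_add {k t : ℕ} (hj : 0 < j) (hakt : a + t = k * j)
    (hineq : h * t ≤ h * k + d) (s : ℕ) : aperyElt a j h d s ≤ aperyElt a j h d (s + a) := by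
  have hdiv : (s + a) / j ≤ s / j + k := by
    calc (s + a) / j ≤ (s + k * j) / j := Nat.div_le_div_right (by omega)
      _ = s / j + k := Nat.add_mul_div_right s k hj
  have hdrop : s % j + s / j + k ≤ (s + a) % j + (s + a) / j + t := by
    have := Nat.mod_add_div s j
    have := Nat.mod_add_div (s + a) j
    obtain ⟨i, rfl⟩ : ∃ i, j = i + 1 := Nat.exists_eq_add_one.2 hj
    nlinarith [Nat.mul_le_mul_left i hdiv]
  have hstep : h * (s % j + s / j) ≤ h * ((s + a) % j + (s + a) / j) + d := by
    have := Nat.mul_le_mul_left h hdrop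
    simp only [mul_add] at this ⊢
    omega
  rw [aperyElt_eq, aperyElt_eq]
  nlinarith [Nat.mul_le_mul_right a hstep]

theorem isRepresentable_iff_exists_aperyElt_le {k t : ℕ} (hj : 0 < j) (ha : 0 < a)
    (hakt : a + t = k * j) (hineq : h * t ≤ h * k + d) (m : ℕ) :
    IsRepresentable ![a, h * a + d, h * a + j * d] m ↔
      ∃ s < a, aperyElt a j h d s ≤ m ∧ aperyElt a j h d s ≡ m [MOD a] := by
  rw [isRepresentable_iff_exists_aperyElt_add hj]
  constructor
  · rintro ⟨s, q, rfl⟩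
    have hmono : Monotone fun q => aperyElt a j h d (s % a + a * q) :=
      monotone_nat_of_le_succ fun q => by
        rw [mul_add_one, ← add_assoc]; exact aperyElt_le_add hj hakt hineq _
    have hs : s % a + a * (s / a) = s := Nat.mod_add_div s a
    refine ⟨s % a, Nat.mod_lt s ha, ?_, ?_⟩
    · calc aperyElt a j h d (s % a)
          ≤ aperyElt a j h d (s % a + a * (s / a)) := hmono (Nat.zero_le _)
        _ ≤ _ := by rw [hs]; exact Nat.le_add_right _ _
    · calc aperyElt a j h d (s % a) ≡ s % a * d [MOD a] := aperyElt_modEq _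
        _ ≡ s * d [MOD a] := (Nat.mod_modEq s a).mul_right d
        _ ≡ aperyElt a j h d s [MOD a] := (aperyElt_modEq s).symm
        _ ≡ aperyElt a j h d s + a * q [MOD a] := by
          rw [Nat.ModEq, Nat.add_mul_mod_self_left]
  · rintro ⟨s, -, hle, hmod⟩
    obtain ⟨q, hq⟩ := (Nat.modEq_iff_dvd' hle).1 hmod
    exact ⟨s, q, by omega⟩

theorem injOn_aperyElt_mod (had : Nat.Coprime a d) :
    Set.InjOn (fun s => aperyElt a j h d s % a) (range a) := fun s hs s' hs' heq =>
  Nat.injOn_mul_mod_range had hs hs' <|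
    ((aperyElt_modEq s).symm.trans <| heq.trans (aperyElt_modEq s'))

theorem ncard_setOf_not_isRepresentable {k t : ℕ} (hj : 0 < j) (ha : 0 < a)
    (had : Nat.Coprime a d) (hakt : a + t = k * j) (hineq : h * t ≤ h * k + d) :
    {m | ¬ IsRepresentable ![a, h * a + d, h * a + j * d] m}.ncard =
      ∑ s ∈ range a, (h * (s % j + s / j) + s * d / a) := by
  rw [ncard_setOf_not_eq_sum_div ha (injOn_aperyElt_mod had)
    (isRepresentable_iff_exists_aperyElt_le hj ha hakt hineq)]
  exact sum_congr rfl fun s _ => by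
    rw [aperyElt_eq, add_comm, Nat.add_mul_div_right _ _ ha, add_comm]

end ThreeGenerators

theorem stmt_8_general (a j h d k t : ℕ) (hj : 2 < j)
    (had : Nat.gcd a d = 1) (hk : 1 ≤ k) (ht : t ≤ j - 1)
    (hakt : a + t = k * j) (hineq : h * t ≤ h * k + d) :
    (({m : ℕ | ¬ IsRepresentable ![a, h * a + d, h * a + j * d] m}.ncard : ℚ)) =
      ((a : ℚ) - 1) * ((h : ℚ) * a + d - 1) / 2
        - ((h : ℚ) * ((j : ℚ) - 1) * ((a : ℚ) - t) / 2)
          * (((a : ℚ) + t) / j - 1) := by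
  have hj0 : 0 < j := by omega
  have ha0 : 0 < a := by have := Nat.le_mul_of_pos_left j hk; omega
  rw [ncard_setOf_not_isRepresentable hj0 ha0 had hakt hineq, sum_add_distrib, ← mul_sum,
    sum_add_distrib]
  have hmod : ∑ s ∈ range a, s % j + j * ∑ s ∈ range a, s / j = ∑ s ∈ range a, s := by
    rw [mul_sum, ← sum_add_distrib]; exact sum_congr rfl fun s _ => Nat.mod_add_div s j
  have hdiv := Nat.sum_range_div_add_mul hakt (by omega)
  have hmul := Nat.sum_range_mul_div_mul_two_add had
  have hid := sum_range_id_mul_two a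
  have hidk := sum_range_id_mul_two k
  have hka : ((a : ℚ) + t) / j = k := by
    rw [div_eq_iff (by positivity)]; exact_mod_cast hakt
  rw [hka]
  have hq : (a : ℚ) = k * j - t := by
    linear_combination (by exact_mod_cast hakt : (a : ℚ) + t = k * j)
  apply_fun (Nat.cast : ℕ → ℚ) at hmod hdiv hmul hid hidk
  push_cast [Nat.cast_sub hk, Nat.cast_sub (show 1 ≤ a by omega)] at hmod hdiv hmul hid hidk ⊢
  rw [hq] at hmul hid ⊢
  linear_combination (h : ℚ) * hmod + (h / 2 : ℚ) * hid - (h * (j - 1) : ℚ) * hdiv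
    - (h * (j - 1) * j / 2 : ℚ) * hidk + (1 / 2 : ℚ) * hmul

/-- Sylvester number for `A = (a, ha+d, ha+jd)` with `a, j > 2`, `h ≥ d ≥ 1`,
`gcd(a, d) = 1`, `a = kj - t` (`k ≥ 1`, `0 ≤ t ≤ j-1`) and `hk + d - ht ≥ 0`:
`n(A) = (a-1)(ha+d-1)/2 - (h(j-1)(a-t)/2)·((a+t)/j - 1)`. -/
theorem stmt_8 (a j h d k t : ℕ) (ha : 2 < a) (hj : 2 < j) (hd : 0 < d)
    (hdh : d ≤ h) (had : Nat.gcd a d = 1) (hk : 1 ≤ k) (ht : t ≤ j - 1)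
    (hakt : a + t = k * j) (hineq : h * t ≤ h * k + d) :
    (({m : ℕ | ¬ IsRepresentable ![a, h * a + d, h * a + j * d] m}.ncard : ℚ)) =
      ((a : ℚ) - 1) * ((h : ℚ) * a + d - 1) / 2
        - ((h : ℚ) * ((j : ℚ) - 1) * ((a : ℚ) - t) / 2)
          * (((a : ℚ) + t) / j - 1) :=
  stmt_8_general a j h d k t hj had hk ht hakt hineq
end

section
/- Let a > 2 and s ≥ 1 be integers and let A = (sa, sa+1, sa+a). Then g(A) = as(a+s−2) − 1. -/
lemma rep_of_ge (a s : ℕ) (ha : 2 < a) (hs : 1 ≤ s) (m : ℕ)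
    (hm : a * s * (a + s - 2) ≤ m) :
    IsRepresentable ![s * a, s * a + 1, s * a + a] m := by
  have ha0 : 0 < a := by omega
  have hs0 : 0 < s := by omega
  set y := m % a with hy
  set q := m / a with hq
  have hya : y < a := Nat.mod_lt _ ha0
  have hmq : m = a * q + y := (Nat.div_add_mod m a).symm
  have hqK : s * (a + s - 2) ≤ q := by
    have h1 : a * (s * (a + s - 2)) ≤ a * q + y := by
      calc a * (s * (a + s - 2)) = a * s * (a + s - 2) := by ring
        _ ≤ m := hm
        _ = a * q + y := hmq
    have h2 : a * (s * (a + s - 2)) < a * (q + 1) := by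
      have : a * (q + 1) = a * q + a := by ring
      omega
    exact Nat.lt_succ_iff.mp (Nat.lt_of_mul_lt_mul_left h2)
  set u := q / s with hu
  set r := q % s with hr
  have hrs : r < s := Nat.mod_lt _ hs0
  have hqu : q = s * u + r := (Nat.div_add_mod q s).symm
  have huK : a + s - 2 ≤ u := by
    have h2 : s * (a + s - 2) < s * (u + 1) := by
      have : s * (u + 1) = s * u + s := by ring
      omega
    exact Nat.lt_succ_iff.mp (Nat.lt_of_mul_lt_mul_left h2)
  obtain ⟨d, hd⟩ : ∃ d, u = y + r + d := ⟨u - (y + r), by omega⟩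
  refine ⟨![d, y, r], ?_⟩
  rw [Fin.sum_univ_three]
  simp only [Matrix.cons_val_zero, Matrix.cons_val_one, Matrix.head_cons,
    Matrix.cons_val_two, Matrix.tail_cons]
  rw [hmq, hqu, hd]; ring

set_option maxHeartbeats 1000000 in
lemma nonrep (a s : ℕ) (ha : 2 < a) (hs : 1 ≤ s) :
    ¬ IsRepresentable ![s * a, s * a + 1, s * a + a] (a * s * (a + s - 2) - 1) := by
  rintro ⟨x, hx⟩
  rw [Fin.sum_univ_three] at hx
  simp only [Matrix.cons_val_zero, Matrix.cons_val_one, Matrix.head_cons,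
    Matrix.cons_val_two, Matrix.tail_cons] at hx
  have hP : 1 ≤ a * s * (a + s - 2) := by
    have : 0 < a * s * (a + s - 2) := by
      apply Nat.mul_pos (Nat.mul_pos (by omega) (by omega)) (by omega)
    omega
  have hx' : a * s * (a + s - 2) =
      s * a * x 0 + (s * a + 1) * x 1 + (s * a + a) * x 2 + 1 :=
    (Nat.sub_eq_iff_eq_add hP).mp hx
  have h1 := congrArg (fun n : ℕ => (n : ℤ)) hx'
  push_cast [Nat.cast_sub (by omega : 2 ≤ a + s)] at h1
  set A : ℤ := (a : ℤ) with hA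
  set S : ℤ := (s : ℤ) with hS
  have hA3 : 3 ≤ A := by rw [hA]; exact_mod_cast ha
  have hS1 : 1 ≤ S := by rw [hS]; exact_mod_cast hs
  set X0 : ℤ := (x 0 : ℤ) with hX0
  set X1 : ℤ := (x 1 : ℤ) with hX1
  set X2 : ℤ := (x 2 : ℤ) with hX2
  have hX0n : 0 ≤ X0 := by rw [hX0]; positivity
  have hX1n : 0 ≤ X1 := by rw [hX1]; positivity
  have hX2n : 0 ≤ X2 := by rw [hX2]; positivity
  -- h1 : A * S * (A + S - 2) = S * A * X0 + (S * A + 1) * X1 + (S * A + A) * X2 + 1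
  set T : ℤ := X0 + X1 + X2 with hT
  have h2 : S * A * T + X1 + A * X2 + 1 = A * S * (A + S - 2) := by
    rw [hT]; linarith [h1]
  -- T ≤ A + S - 3
  have hT3 : T ≤ A + S - 3 := by
    have hAX2 : 0 ≤ A * X2 := mul_nonneg (by linarith) hX2n
    have hlt : S * A * T < S * A * (A + S - 2) := by linarith
    have := lt_of_mul_lt_mul_left hlt (by positivity : (0:ℤ) ≤ S * A)
    linarith
  -- X1 ≥ A - 1
  have hX1A : A - 1 ≤ X1 := by
    have hw : X1 + 1 = A * (S * (A + S - 2) - S * T - X2) := by linear_combination h2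
    set w : ℤ := S * (A + S - 2) - S * T - X2 with hwdef
    have hw1 : 1 ≤ w := by
      by_contra hc
      push_neg at hc
      have : w ≤ 0 := by omega
      have : A * w ≤ 0 := mul_nonpos_of_nonneg_of_nonpos (by linarith) this
      linarith
    have hAw : A * 1 ≤ A * w := mul_le_mul_of_nonneg_left hw1 (by linarith)
    linarith
  -- contradiction
  have hAX2' : A * X2 ≤ A * (T - X1) := by
    have : X2 ≤ T - X1 := by rw [hT]; linarith
    exact mul_le_mul_of_nonneg_left this (by linarith)
  have hint1 : S * A * T ≤ S * A * (A + S - 3) :=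
    mul_le_mul_of_nonneg_left hT3 (by positivity : (0:ℤ) ≤ S * A)
  have hint2 : A * T ≤ A * (A + S - 3) :=
    mul_le_mul_of_nonneg_left hT3 (by linarith : (0:ℤ) ≤ A)
  have hint3 : (A - 1) * (A - 1) ≤ (A - 1) * X1 :=
    mul_le_mul_of_nonneg_left hX1A (by linarith : (0:ℤ) ≤ A - 1)
  nlinarith [h2, hAX2', hint1, hint2, hint3]

/-- For `A = (sa, sa+1, sa+a)` with `a > 2` and `s ≥ 1`:
`g(A) = as(a+s-2) - 1`. -/
theorem stmt_9 (a s : ℕ) (ha : 2 < a) (hs : 1 ≤ s)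
    (g : ℕ)
    (hg : IsGreatest {m : ℕ | ¬ IsRepresentable ![s * a, s * a + 1, s * a + a] m} g) :
    (g : ℤ) = a * s * ((a : ℤ) + s - 2) - 1 := by
  have hP : 1 ≤ a * s * (a + s - 2) := by
    have : 0 < a * s * (a + s - 2) := by
      apply Nat.mul_pos (Nat.mul_pos (by omega) (by omega)) (by omega)
    omega
  have hlb : a * s * (a + s - 2) - 1 ≤ g := hg.2 (nonrep a s ha hs)
  have hub : g ≤ a * s * (a + s - 2) - 1 := by
    by_contra hc
    push_neg at hc
    exact hg.1 (rep_of_ge a s ha hs g (by omega))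
  have hge : g + 1 = a * s * (a + s - 2) := by omega
  have h := congrArg (fun n : ℕ => (n : ℤ)) hge
  push_cast [Nat.cast_sub (by omega : 2 ≤ a + s)] at h
  linarith
end

section
/- Let A = (a, a+1, a+2, a+4) with a ≥ 2. Then g(A) = (a+1)·⌊a/4⌋ + ⌊(a+1)/4⌋ + 2·⌊(a+2)/4⌋ − 1. -/
lemma rep_iff' (a m : ℕ) :
    IsRepresentable ![a, a + 1, a + 2, a + 4] m ↔
      ∃ s t : ℕ, m = a * s + t ∧ t ≤ 4 * s ∧ 4 * s ≠ t + 1 := by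
  constructor
  · rintro ⟨x, rfl⟩
    refine ⟨x 0 + x 1 + x 2 + x 3, x 1 + 2 * x 2 + 4 * x 3, ?_, by omega, by omega⟩
    simp [Fin.sum_univ_four]
    ring
  · rintro ⟨s, t, rfl, h1, h2⟩
    obtain ⟨u, v, hv, rfl⟩ : ∃ u v, v < 4 ∧ t = 4 * u + v :=
      ⟨t / 4, t % 4, by omega, by omega⟩
    interval_cases v
    · obtain ⟨w, rfl⟩ : ∃ w, s = w + u := ⟨s - u, by omega⟩
      exact ⟨![w, 0, 0, u], by simp [Fin.sum_univ_four]; ring⟩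
    · obtain ⟨w, rfl⟩ : ∃ w, s = w + (u + 1) := ⟨s - (u + 1), by omega⟩
      exact ⟨![w, 1, 0, u], by simp [Fin.sum_univ_four]; ring⟩
    · obtain ⟨w, rfl⟩ : ∃ w, s = w + (u + 1) := ⟨s - (u + 1), by omega⟩
      exact ⟨![w, 0, 1, u], by simp [Fin.sum_univ_four]; ring⟩
    · obtain ⟨w, rfl⟩ : ∃ w, s = w + (u + 2) := ⟨s - (u + 2), by omega⟩
      exact ⟨![w, 1, 1, u], by simp [Fin.sum_univ_four]; ring⟩

lemma aux' (a q r c : ℕ) (ha2 : 2 ≤ a) (ha : a = 4 * q + r) (hr : r < 4)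
    (hne : c ≠ 1) (hB : c = r ∨ (c = 0 ∧ r = 1)) :
    IsGreatest {m | ¬ IsRepresentable ![a, a + 1, a + 2, a + 4] m}
      (a * q + 4 * q + c - 1) := by
  have hcr : c ≤ r := by rcases hB with h | h <;> omega
  have hq1 : c = 0 → 1 ≤ q := by intro h0; rcases hB with h | h <;> omega
  have hX1 : 1 ≤ a * q + 4 * q + c := by
    rcases Nat.eq_zero_or_pos c with h | h
    · have := hq1 h; omega
    · omega
  have key : ∀ m, a * q + 4 * q + c ≤ m → IsRepresentable ![a, a + 1, a + 2, a + 4] m := by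
    intro m
    induction m using Nat.strong_induction_on with
    | _ m ih =>
      intro hmX
      rw [rep_iff']
      by_cases hbig : a * q + 4 * q + c + a ≤ m
      · have ham : a ≤ m := by omega
        have hrec := ih (m - a) (by omega) (by omega)
        rw [rep_iff'] at hrec
        obtain ⟨s, t, he, h1, h2⟩ := hrec
        have h3 : a * (s + 1) = a * s + a := by ring
        exact ⟨s + 1, t, by omega, by omega, by omega⟩
      · push_neg at hbig
        by_cases hq1' : a * (q + 1) ≤ m
        · have h3 : a * (q + 1) = a * q + a := by ring
          exact ⟨q + 1, m - a * (q + 1), by omega, by omega, by omega⟩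
        · push_neg at hq1'
          have h3 : a * (q + 1) = a * q + a := by ring
          have hcase : c = 0 ∧ r = 1 := by
            rcases hB with hcc | hcc
            · exfalso; omega
            · exact hcc
          exact ⟨q, 4 * q, by omega, le_refl _, by omega⟩
  constructor
  · simp only [Set.mem_setOf_eq, rep_iff']
    rintro ⟨s, t, heq, h1, h2⟩
    have hXe : a * q + 4 * q + c = a * s + t + 1 := by omega
    rcases lt_trichotomy s q with hlt | rfl | hgt
    · have hm : a * (s + 1) ≤ a * q := mul_le_mul_right (by omega) a
      have hm2 : a * (s + 1) = a * s + a := by ring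
      omega
    · omega
    · have hm : a * (q + 1) ≤ a * s := mul_le_mul_right (by omega) a
      have hm2 : a * (q + 1) = a * q + a := by ring
      omega
  · intro m hm
    simp only [Set.mem_setOf_eq] at hm
    by_contra hgt
    push_neg at hgt
    exact hm (key m (by omega))

lemma main' (a : ℕ) (ha : 2 ≤ a) :
    IsGreatest {m | ¬ IsRepresentable ![a, a + 1, a + 2, a + 4] m}
      ((a + 1) * (a / 4) + (a + 1) / 4 + 2 * ((a + 2) / 4) - 1) := by
  obtain ⟨q, r, hr, rfl⟩ : ∃ q r, r < 4 ∧ a = 4 * q + r := ⟨a / 4, a % 4, by omega, by omega⟩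
  interval_cases r
  · have hF : (4 * q + 0 + 1) * ((4 * q + 0) / 4) + (4 * q + 0 + 1) / 4 + 2 * ((4 * q + 0 + 2) / 4)
        = (4 * q + 0) * q + 4 * q + 0 := by
      have e0 : (4 * q + 0) / 4 = q := by omega
      have e1 : (4 * q + 0 + 1) / 4 = q := by omega
      have e2 : (4 * q + 0 + 2) / 4 = q := by omega
      rw [e0, e1, e2]; ring
    rw [hF]
    exact aux' _ q 0 0 ha rfl (by omega) (by omega) (Or.inl rfl)
  · have hF : (4 * q + 1 + 1) * ((4 * q + 1) / 4) + (4 * q + 1 + 1) / 4 + 2 * ((4 * q + 1 + 2) / 4)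
        = (4 * q + 1) * q + 4 * q + 0 := by
      have e0 : (4 * q + 1) / 4 = q := by omega
      have e1 : (4 * q + 1 + 1) / 4 = q := by omega
      have e2 : (4 * q + 1 + 2) / 4 = q := by omega
      rw [e0, e1, e2]; ring
    rw [hF]
    exact aux' _ q 1 0 ha rfl (by omega) (by omega) (Or.inr ⟨rfl, rfl⟩)
  · have hF : (4 * q + 2 + 1) * ((4 * q + 2) / 4) + (4 * q + 2 + 1) / 4 + 2 * ((4 * q + 2 + 2) / 4)
        = (4 * q + 2) * q + 4 * q + 2 := by
      have e0 : (4 * q + 2) / 4 = q := by omega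
      have e1 : (4 * q + 2 + 1) / 4 = q := by omega
      have e2 : (4 * q + 2 + 2) / 4 = q + 1 := by omega
      rw [e0, e1, e2]; ring
    rw [hF]
    exact aux' _ q 2 2 ha rfl (by omega) (by omega) (Or.inl rfl)
  · have hF : (4 * q + 3 + 1) * ((4 * q + 3) / 4) + (4 * q + 3 + 1) / 4 + 2 * ((4 * q + 3 + 2) / 4)
        = (4 * q + 3) * q + 4 * q + 3 := by
      have e0 : (4 * q + 3) / 4 = q := by omega
      have e1 : (4 * q + 3 + 1) / 4 = q + 1 := by omega
      have e2 : (4 * q + 3 + 2) / 4 = q + 1 := by omega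
      rw [e0, e1, e2]; ring
    rw [hF]
    exact aux' _ q 3 3 ha rfl (by omega) (by omega) (Or.inl rfl)

/-- For `A = (a, a+1, a+2, a+4)` with `a ≥ 2`:
`g(A) = (a+1)·⌊a/4⌋ + ⌊(a+1)/4⌋ + 2·⌊(a+2)/4⌋ - 1`. -/
theorem stmt_11 (a : ℕ) (ha : 2 ≤ a)
    (g : ℕ)
    (hg : IsGreatest {m : ℕ | ¬ IsRepresentable ![a, a + 1, a + 2, a + 4] m} g) :
    (g : ℤ) = ((a : ℤ) + 1) * ((a / 4 : ℕ) : ℤ) + (((a + 1) / 4 : ℕ) : ℤ)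
      + 2 * (((a + 2) / 4 : ℕ) : ℤ) - 1 := by
  have hgF : g = (a + 1) * (a / 4) + (a + 1) / 4 + 2 * ((a + 2) / 4) - 1 :=
    hg.unique (main' a ha)
  subst hgF
  have h2 : 1 ≤ (a + 2) / 4 := by omega
  have h1 : 1 ≤ (a + 1) * (a / 4) + (a + 1) / 4 + 2 * ((a + 2) / 4) := by
    have := Nat.zero_le ((a + 1) * (a / 4))
    omega
  rw [Nat.cast_sub h1]
  push_cast
  ring
end

section
/- Let B = (1, a, a+1) with a ≥ 2 and let M > 0 be an integer. If (a+1) does not divide M and M ≥ a·(⌊M/(a+1)⌋ + 1), then O_B(M) = 1 + ⌊M/(a+1)⌋; otherwise, O_B(M) = M − a·⌊M/(a+1)⌋. -/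
/-- For `B = (1, a, a+1)` with `a ≥ 2` and `M > 0`: if `(a+1) ∤ M` and
`M ≥ a·(⌊M/(a+1)⌋ + 1)` then `O_B(M) = 1 + ⌊M/(a+1)⌋`; otherwise
`O_B(M) = M - a·⌊M/(a+1)⌋`. -/
theorem stmt_12 (a : ℕ) (ha : 2 ≤ a) (M : ℕ) (hM : 0 < M) :
    ((¬ (a + 1) ∣ M ∧ a * (M / (a + 1) + 1) ≤ M) →
      IsLeast {v : ℕ | ∃ x1 x2 x3 : ℕ,
        1 * x1 + a * x2 + (a + 1) * x3 = M ∧ v = x1 + x2 + x3}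
        (1 + M / (a + 1))) ∧
    (¬ (¬ (a + 1) ∣ M ∧ a * (M / (a + 1) + 1) ≤ M) →
      IsLeast {v : ℕ | ∃ x1 x2 x3 : ℕ,
        1 * x1 + a * x2 + (a + 1) * x3 = M ∧ v = x1 + x2 + x3}
        (M - a * (M / (a + 1)))) := by
  set q := M / (a + 1) with hq
  set r := M % (a + 1) with hrdef
  have hr : r < a + 1 := Nat.mod_lt M (by omega)
  have key : M = a * q + q + r := by
    have := Nat.div_add_mod M (a + 1)
    rw [← hq, ← hrdef] at this
    nlinarith [this]
  constructor
  · rintro ⟨hndvd, hle⟩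
    have hr1 : 1 ≤ r := by
      rcases Nat.eq_zero_or_pos r with h0 | h1
      · exact absurd ((Nat.dvd_iff_mod_eq_zero).mpr h0) hndvd
      · exact h1
    have hexp : a * (q + 1) = a * q + a := by ring
    obtain ⟨s, hs⟩ : ∃ s, M = a * (q + 1) + s :=
      ⟨M - a * (q + 1), (Nat.add_sub_cancel' hle).symm⟩
    have hsq : s ≤ q := by
      rw [hexp] at hs; omega
    obtain ⟨d, hd⟩ : ∃ d, q + 1 = s + d := ⟨q + 1 - s, by omega⟩
    constructor
    · exact ⟨0, d, s, by rw [hs, hd]; ring, by omega⟩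
    · rintro v ⟨x1, x2, x3, heq, hv⟩
      by_contra hcon
      push_neg at hcon
      have hvq : x1 + x2 + x3 ≤ q := by omega
      have h1 : M ≤ (a + 1) * (x1 + x2 + x3) := by
        calc M = 1 * x1 + a * x2 + (a + 1) * x3 := heq.symm
          _ ≤ (a + 1) * x1 + (a + 1) * x2 + (a + 1) * x3 := by
              gcongr <;> omega
          _ = (a + 1) * (x1 + x2 + x3) := by ring
      have h2 : (a + 1) * (x1 + x2 + x3) ≤ (a + 1) * q :=
        Nat.mul_le_mul_left _ hvq
      nlinarith [key, h1, h2]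
  · intro hnot
    have haqM : a * q ≤ M := by linarith [key]
    constructor
    · refine ⟨r, 0, q, ?_, ?_⟩
      · have := Nat.div_add_mod M (a + 1)
        rw [← hq, ← hrdef] at this
        linarith [this]
      · rw [Nat.sub_eq_iff_eq_add haqM]; linarith [key]
    · rintro v ⟨x1, x2, x3, heq, hv⟩
      have heq' : x1 + a * x2 + (a * x3 + x3) = M := by
        rw [← heq]; ring
      rw [Nat.sub_le_iff_le_add]
      rcases Classical.em ((a + 1) ∣ M) with hdvd | hndvd
      · -- r = 0, M = (a+1) q, need M ≤ v + a q; from q ≤ v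
        have hr0 : r = 0 := (Nat.dvd_iff_mod_eq_zero).mp hdvd
        have h1 : M ≤ (a + 1) * (x1 + x2 + x3) := by
          calc M = 1 * x1 + a * x2 + (a + 1) * x3 := heq.symm
            _ ≤ (a + 1) * x1 + (a + 1) * x2 + (a + 1) * x3 := by
                gcongr <;> omega
            _ = (a + 1) * (x1 + x2 + x3) := by ring
        have hqv : q ≤ x1 + x2 + x3 := by
          have h2 : (a + 1) * q ≤ (a + 1) * (x1 + x2 + x3) := by nlinarith [key]
          exact Nat.le_of_mul_le_mul_left h2 (by omega)
        omega
      · have hlt : M < a * (q + 1) := by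
          rcases Nat.lt_or_ge M (a * (q + 1)) with h | h
          · exact h
          · exact absurd ⟨hndvd, h⟩ hnot
        have ht : a * (x2 + x3) ≤ M := by
          have hexp2 : a * (x2 + x3) = a * x2 + a * x3 := by ring
          omega
        have ht2 : x2 + x3 ≤ q := by
          have := Nat.lt_of_mul_lt_mul_left (a := a) (lt_of_le_of_lt ht hlt)
          omega
        have hmul : a * (x2 + x3) ≤ a * q := Nat.mul_le_mul_left _ ht2
        have hexp2 : a * (x2 + x3) = a * x2 + a * x3 := by ring
        omega
end

section
/- Let a > 1, let h, d be positive integers with gcd(a, d) = 1, and let A = (a², ha²+d, ha²+ad, ha²+(a+1)d). Then g(A) = ha³ + (d−h−1)a² − d. -/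
theorem isRepresentable_four_iff (a₀ a₁ a₂ a₃ m : ℕ) :
    IsRepresentable ![a₀, a₁, a₂, a₃] m ↔
      ∃ x₀ x₁ x₂ x₃, m = a₀ * x₀ + a₁ * x₁ + a₂ * x₂ + a₃ * x₃ := by
  constructor
  · rintro ⟨x, rfl⟩
    exact ⟨x 0, x 1, x 2, x 3, by simp [Fin.sum_univ_four]⟩
  · rintro ⟨x₀, x₁, x₂, x₃, rfl⟩
    exact ⟨![x₀, x₁, x₂, x₃], by simp [Fin.sum_univ_four]⟩

theorem exists_coins_one_self_succ (a t : ℕ) :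
    ∃ x₁ x₂ x₃, x₁ + a * x₂ + (a + 1) * x₃ = t ∧ x₁ + x₂ + x₃ = max (t / a) (t % a) := by
  have ht := Nat.div_add_mod t a
  generalize t / a = q, t % a = r at ht ⊢
  subst ht
  rcases le_total r q with hle | hle
  · obtain ⟨e, rfl⟩ := Nat.exists_eq_add_of_le hle
    exact ⟨0, e, r, by ring, by simp [add_comm]⟩
  · obtain ⟨e, rfl⟩ := Nat.exists_eq_add_of_le hle
    exact ⟨e, 0, q, by ring, by simp [add_comm]⟩

theorem max_div_mod_le_pred {a t : ℕ} (ht : t < a ^ 2) : max (t / a) (t % a) ≤ a - 1 := by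
  have ha : 0 < a := Nat.pos_of_ne_zero fun h0 => by simp [h0] at ht
  have hdiv : t / a < a := Nat.div_lt_of_lt_mul (by rwa [← sq])
  have hmod : t % a < a := Nat.mod_lt t ha
  omega

def squareSeq (a h d : ℕ) : Fin 4 → ℕ :=
  ![a ^ 2, h * a ^ 2 + d, h * a ^ 2 + a * d, h * a ^ 2 + (a + 1) * d]

def squareSeqFrobenius (a h d : ℕ) : ℕ :=
  a ^ 2 * (h * (a - 1) - 1) + d * (a ^ 2 - 1)

section
variable {a h d : ℕ}

theorem isRepresentable_squareSeq_iff {m : ℕ} :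
    IsRepresentable (squareSeq a h d) m ↔ ∃ x₀ x₁ x₂ x₃,
      m = a ^ 2 * (x₀ + h * (x₁ + x₂ + x₃)) + d * (x₁ + a * x₂ + (a + 1) * x₃) := by
  rw [squareSeq, isRepresentable_four_iff]
  refine exists₄_congr fun x₀ x₁ x₂ x₃ => ?_
  ring_nf

theorem isRepresentable_squareSeq_sq_mul_add {j t : ℕ} (ht : t < a ^ 2) (hj : h * (a - 1) ≤ j) :
    IsRepresentable (squareSeq a h d) (a ^ 2 * j + d * t) := by
  obtain ⟨x₁, x₂, x₃, hsum, hcount⟩ := exists_coins_one_self_succ a t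
  have hC : h * (x₁ + x₂ + x₃) ≤ j :=
    (Nat.mul_le_mul_left h (hcount ▸ max_div_mod_le_pred ht)).trans hj
  refine isRepresentable_squareSeq_iff.mpr ⟨j - h * (x₁ + x₂ + x₃), x₁, x₂, x₃, ?_⟩
  rw [Nat.sub_add_cancel hC, hsum]

theorem not_isRepresentable_squareSeqFrobenius (ha : 1 < a) (hh : 0 < h)
    (had : Nat.Coprime a d) : ¬ IsRepresentable (squareSeq a h d) (squareSeqFrobenius a h d) := by
  rw [isRepresentable_squareSeq_iff]
  rintro ⟨x₀, x₁, x₂, x₃, hx⟩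
  set C := x₁ + x₂ + x₃
  set t := x₁ + a * x₂ + (a + 1) * x₃
  have hmod : d * t ≡ d * (a ^ 2 - 1) [MOD a ^ 2] := by
    have := congrArg (· % a ^ 2) hx
    simp only [squareSeqFrobenius, Nat.mul_add_mod] at this
    exact this.symm
  have hpos : 0 < a ^ 2 := by positivity
  have ht : a ^ 2 - 1 ≤ t := by
    have := Nat.ModEq.cancel_left_of_coprime (had.pow_left 2) hmod
    rw [Nat.ModEq, Nat.mod_eq_of_lt (by omega : a ^ 2 - 1 < a ^ 2)] at this
    exact this ▸ Nat.mod_le t (a ^ 2)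
  have hC : a - 1 ≤ C := by
    refine Nat.le_of_mul_le_mul_left ?_ (by omega : 0 < a + 1)
    calc (a + 1) * (a - 1) = a ^ 2 - 1 := by
          rw [← Nat.sq_sub_sq, one_pow]
      _ ≤ t := ht
      _ ≤ (a + 1) * C := by simp only [t, C]; nlinarith
  have hh1 : 1 ≤ h * (a - 1) := Nat.mul_pos hh (by omega)
  have hcost : h * (a - 1) ≤ x₀ + h * C := le_add_left (by gcongr)
  refine (lt_irrefl (squareSeqFrobenius a h d)) ?_
  calc squareSeqFrobenius a h d < a ^ 2 * (h * (a - 1)) + d * (a ^ 2 - 1) := by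
        unfold squareSeqFrobenius; gcongr; omega
    _ ≤ a ^ 2 * (x₀ + h * C) + d * t := by gcongr
    _ = squareSeqFrobenius a h d := hx.symm

theorem isRepresentable_squareSeq_of_lt (ha : a ≠ 0) (had : Nat.Coprime a d) {m : ℕ}
    (hm : squareSeqFrobenius a h d < m) : IsRepresentable (squareSeq a h d) m := by
  obtain ⟨t, ht, hdt⟩ := Nat.exists_mul_mod_eq_of_coprime m (had.pow_left 2).symm (by positivity)
  have hdt_le : d * t ≤ d * (a ^ 2 - 1) := by gcongr; omega
  have hdt_lt : d * t < m := by unfold squareSeqFrobenius at hm; omega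
  obtain ⟨j, hj⟩ := (Nat.modEq_iff_dvd' hdt_lt.le).mp hdt
  have hjm : m = a ^ 2 * j + d * t := by omega
  rw [hjm]
  refine isRepresentable_squareSeq_sq_mul_add ht ?_
  have hlt : a ^ 2 * (h * (a - 1) - 1) < a ^ 2 * j := by unfold squareSeqFrobenius at hm; omega
  have := Nat.lt_of_mul_lt_mul_left hlt
  omega

theorem isGreatest_squareSeqFrobenius (ha : 1 < a) (hh : 0 < h) (had : Nat.Coprime a d) :
    IsGreatest {m | ¬ IsRepresentable (squareSeq a h d) m} (squareSeqFrobenius a h d) :=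
  ⟨not_isRepresentable_squareSeqFrobenius ha hh had, fun _ hm =>
    not_lt.mp fun hlt => hm (isRepresentable_squareSeq_of_lt (by omega) had hlt)⟩

end

theorem stmt_13_general (a h d : ℕ) (ha : 1 < a) (hh : 0 < h)
    (had : Nat.gcd a d = 1)
    (g : ℕ)
    (hg : IsGreatest {m : ℕ | ¬ IsRepresentable
      ![a ^ 2, h * a ^ 2 + d, h * a ^ 2 + a * d, h * a ^ 2 + (a + 1) * d] m} g) :
    (g : ℤ) = h * a ^ 3 + ((d : ℤ) - h - 1) * a ^ 2 - d := by
  rw [hg.unique (isGreatest_squareSeqFrobenius ha hh had), squareSeqFrobenius]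
  have hh1 : 1 ≤ h * (a - 1) := Nat.mul_pos hh (by omega)
  have ha2 : 1 ≤ a ^ 2 := Nat.one_le_pow _ _ (by omega)
  push_cast [Nat.cast_sub hh1, Nat.cast_sub ha2, Nat.cast_sub ha.le]
  ring

/-- For `A = (a², ha²+d, ha²+ad, ha²+(a+1)d)` with `a > 1`, `h, d ≥ 1` and
`gcd(a, d) = 1`: `g(A) = ha³ + (d-h-1)a² - d`. -/
theorem stmt_13 (a h d : ℕ) (ha : 1 < a) (hh : 0 < h) (hd : 0 < d)
    (had : Nat.gcd a d = 1)
    (g : ℕ)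
    (hg : IsGreatest {m : ℕ | ¬ IsRepresentable
      ![a ^ 2, h * a ^ 2 + d, h * a ^ 2 + a * d, h * a ^ 2 + (a + 1) * d] m} g) :
    (g : ℤ) = h * a ^ 3 + ((d : ℤ) - h - 1) * a ^ 2 - d :=
  stmt_13_general a h d ha hh had g hg
end

section
/- Let a > 1, let h, d be positive integers with gcd(a, d) = 1, and let A = (a², ha²+d, ha²+ad, ha²+(a+1)d). Then the Sylvester number satisfies n(A) = (2/3)ha³ + (1/2)(d−h−1)a² − (1/6)ha + (1/2)(1−d). -/
open Finset

theorem isRepresentable_fin_four_iff (b₀ b₁ b₂ b₃ m : ℕ) :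
    IsRepresentable ![b₀, b₁, b₂, b₃] m ↔
      ∃ x₀ x₁ x₂ x₃, m = b₀ * x₀ + b₁ * x₁ + b₂ * x₂ + b₃ * x₃ := by
  constructor
  · rintro ⟨x, hx⟩
    exact ⟨x 0, x 1, x 2, x 3, by simpa [Fin.sum_univ_four] using hx⟩
  · rintro ⟨x₀, x₁, x₂, x₃, hx⟩
    exact ⟨![x₀, x₁, x₂, x₃], by simpa [Fin.sum_univ_four] using hx⟩

/-- Selmer's formula for the number of gaps in terms of the Apéry set `{w N | N < M}`. -/
theorem ncard_setOf_not_exists_modEq_le {M : ℕ} (hM : 0 < M) {w : ℕ → ℕ}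
    (hw : Set.BijOn (fun N => w N % M) (range M) (range M)) :
    {m | ¬ ∃ N < M, w N ≡ m [MOD M] ∧ w N ≤ m}.ncard = ∑ N ∈ range M, w N / M := by
  have hgaps : {m | ¬ ∃ N < M, w N ≡ m [MOD M] ∧ w N ≤ m} =
      ↑((range M).biUnion fun N => {m ∈ range (w N) | m ≡ w N [MOD M]}) := by
    ext m
    simp only [Set.mem_ofPred_eq, coe_biUnion, coe_range, Set.mem_Iio, coe_filter, mem_range,
      Set.mem_iUnion, exists_prop, not_exists, not_and, not_le]
    constructor
    · intro hm
      obtain ⟨N, hN, hNm⟩ := hw.surjOn (mem_range.2 (m.mod_lt hM))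
      exact ⟨N, mem_range.1 hN, hm N (mem_range.1 hN) hNm, hNm.symm⟩
    · rintro ⟨N, hN, hlt, hmod⟩ N' hN' hmod'
      obtain rfl : N' = N :=
        hw.injOn (mem_range.2 hN') (mem_range.2 hN) (hmod'.trans hmod)
      exact hlt
  rw [hgaps, Set.ncard_coe_finset, card_biUnion]
  · refine sum_congr rfl fun N _ => ?_
    rw [← Nat.count_eq_card_filter_range, Nat.count_modEq_card _ hM, if_neg (lt_irrefl _),
      add_zero]
  · intro N hN N' hN' hne
    refine disjoint_left.2 fun m hm hm' => hne (hw.injOn hN hN' ?_)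
    exact (mem_filter.1 hm).2.symm.trans (mem_filter.1 hm').2

theorem Nat.bijOn_mul_mod_range {d M : ℕ} (hdM : d.Coprime M) :
    Set.BijOn (fun N => d * N % M) (range M) (range M) := by
  have hmaps : Set.MapsTo (fun N => d * N % M) (range M) (range M) := fun N hN =>
    mem_range.2 (Nat.mod_lt _ (Nat.zero_lt_of_lt (mem_range.1 hN)))
  have hinj : Set.InjOn (fun N => d * N % M) (range M) := fun N hN N' hN' h => by
    have := Nat.ModEq.cancel_left_of_coprime (Nat.coprime_comm.1 hdM) h
    rwa [Nat.ModEq, Nat.mod_eq_of_lt (mem_range.1 hN), Nat.mod_eq_of_lt (mem_range.1 hN')] at this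
  exact ⟨hmaps, hinj, surjOn_of_injOn_of_card_le _ hmaps hinj le_rfl⟩

theorem Nat.sum_range_mul_div_mul_two {d M : ℕ} (hdM : d.Coprime M) :
    (∑ N ∈ range M, d * N / M) * 2 = (d - 1) * (M - 1) := by
  rcases M.eq_zero_or_pos with rfl | hM
  · simp
  set S := ∑ N ∈ range M, d * N / M
  set T := ∑ N ∈ range M, N
  have hbij := Nat.bijOn_mul_mod_range hdM
  have hmod : ∑ N ∈ range M, d * N % M = T :=
    sum_nbij (g := id) _ hbij.mapsTo hbij.injOn hbij.surjOn fun _ _ => rfl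
  have hdT : d * T = M * S + T := by
    rw [mul_sum, mul_sum, ← hmod, ← sum_add_distrib]
    exact sum_congr rfl fun N _ => (Nat.div_add_mod _ _).symm
  have hT : T * 2 = M * (M - 1) := sum_range_id_mul_two M
  refine Nat.eq_of_mul_eq_mul_left hM ?_
  calc M * (S * 2) = (d * T - T) * 2 := by rw [hdT, Nat.add_sub_cancel]; ring
    _ = M * ((d - 1) * (M - 1)) := by rw [← Nat.sub_one_mul, mul_assoc, hT]; ring

theorem sum_range_mul_div_mod {β : Type*} [AddCommMonoid β] (f : ℕ → ℕ → β) (m n : ℕ) :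
    ∑ N ∈ range (m * n), f (N / n) (N % n) = ∑ q ∈ range m, ∑ r ∈ range n, f q r := by
  induction m with
  | zero => simp
  | succ m ih =>
    rw [Nat.succ_mul, sum_range_add, ih, sum_range_succ]
    congr 1
    refine sum_congr rfl fun r hr => ?_
    have hr : r < n := mem_range.1 hr
    rw [mul_comm m n, Nat.mul_add_div (Nat.zero_lt_of_lt hr), Nat.div_eq_of_lt hr, add_zero,
      Nat.mul_add_mod, Nat.mod_eq_of_lt hr]

theorem sum_range_sum_range_max_mul_six (n : ℕ) :
    (∑ q ∈ range n, ∑ r ∈ range n, max q r) * 6 = n * (n - 1) * (4 * n + 1) := by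
  induction n with
  | zero => simp
  | succ n ih =>
    have hrow : ∑ q ∈ range n, max q n = n * n := by
      rw [sum_congr rfl fun q hq => max_eq_right (mem_range.1 hq).le]; simp
    have hcol : ∑ r ∈ range (n + 1), max n r = (n + 1) * n := by
      rw [sum_congr rfl fun r hr => max_eq_left (Nat.lt_succ_iff.1 (mem_range.1 hr))]; simp
    rw [sum_range_succ, sum_congr rfl fun q _ => sum_range_succ (max q ·) n, sum_add_distrib,
      hrow, hcol, add_mul, add_mul, ih]
    rcases n with _ | n
    · rfl
    · rw [Nat.add_sub_cancel, Nat.add_sub_cancel]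
      ring

namespace FourGenerators

def apery (a h d N : ℕ) : ℕ := h * a ^ 2 * max (N / a) (N % a) + d * N

theorem apery_mod (a h d N : ℕ) : apery a h d N % a ^ 2 = d * N % a ^ 2 := by
  rw [apery, add_comm, mul_right_comm, Nat.add_mul_mod_self_right]

theorem apery_div {a : ℕ} (ha : 0 < a) (h d N : ℕ) :
    apery a h d N / a ^ 2 = h * max (N / a) (N % a) + d * N / a ^ 2 := by
  rw [apery, add_comm, mul_comm h, mul_assoc, Nat.add_mul_div_left _ _ (by positivity), add_comm]

theorem max_digits_le {a : ℕ} (ha : 0 < a) (X Y Z : ℕ) :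
    max ((X + a * Y + (a + 1) * Z) % a ^ 2 / a) ((X + a * Y + (a + 1) * Z) % a ^ 2 % a) ≤
      X + Y + Z := by
  rw [pow_two, Nat.mod_mul_right_div_self, Nat.mod_mul_right_mod]
  rcases lt_or_ge (X + Y + Z) a with hs | hs
  · have hL : X + a * Y + (a + 1) * Z = X + Z + a * (Y + Z) := by ring
    rw [hL, Nat.add_mul_div_left _ _ ha, Nat.add_mul_mod_self_left, Nat.div_eq_of_lt (by omega),
      zero_add, Nat.mod_eq_of_lt (by omega), Nat.mod_eq_of_lt (by omega)]
    omega
  · exact max_le ((Nat.mod_lt _ ha).le.trans hs) ((Nat.mod_lt _ ha).le.trans hs)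

theorem isRepresentable_apery_add (a h d N k : ℕ) :
    IsRepresentable ![a ^ 2, h * a ^ 2 + d, h * a ^ 2 + a * d, h * a ^ 2 + (a + 1) * d]
      (apery a h d N + a ^ 2 * k) := by
  obtain ⟨q, r, hq, hr⟩ : ∃ q r, N / a = q ∧ N % a = r := ⟨_, _, rfl, rfl⟩
  have hN : a * q + r = N := hq ▸ hr ▸ Nat.div_add_mod N a
  subst hN
  rw [isRepresentable_fin_four_iff, apery, hq, hr]
  rcases le_total r q with hrq | hqr
  · obtain ⟨u, rfl⟩ := Nat.exists_eq_add_of_le hrq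
    exact ⟨k, 0, u, r, by rw [max_eq_left (Nat.le_add_right r u)]; ring⟩
  · obtain ⟨u, rfl⟩ := Nat.exists_eq_add_of_le hqr
    exact ⟨k, u, 0, q, by rw [max_eq_right (Nat.le_add_right q u)]; ring⟩

theorem isRepresentable_iff {a : ℕ} (ha : 0 < a) (h d m : ℕ) :
    IsRepresentable ![a ^ 2, h * a ^ 2 + d, h * a ^ 2 + a * d, h * a ^ 2 + (a + 1) * d] m ↔
      ∃ N < a ^ 2, apery a h d N ≡ m [MOD a ^ 2] ∧ apery a h d N ≤ m := by
  constructor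
  · rw [isRepresentable_fin_four_iff]
    rintro ⟨W, X, Y, Z, hm⟩
    set L := X + a * Y + (a + 1) * Z
    replace hm : m = d * L + a ^ 2 * (W + h * (X + Y + Z)) := by rw [hm]; ring
    refine ⟨L % a ^ 2, Nat.mod_lt _ (by positivity), ?_, ?_⟩
    · rw [Nat.ModEq, apery_mod, hm, Nat.add_mul_mod_self_left, Nat.mul_mod, Nat.mod_mod,
        ← Nat.mul_mod]
    · calc apery a h d (L % a ^ 2) ≤ h * a ^ 2 * (X + Y + Z) + d * L := by
            unfold apery
            gcongr
            · exact max_digits_le ha X Y Z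
            · exact Nat.mod_le _ _
        _ ≤ m := by rw [hm]; nlinarith
  · rintro ⟨N, -, hmod, hle⟩
    obtain ⟨k, hk⟩ := (Nat.modEq_iff_dvd' hle).1 hmod
    rw [← Nat.add_sub_cancel' hle, hk]
    exact isRepresentable_apery_add a h d N k

end FourGenerators

open FourGenerators in
theorem stmt_14_general (a h d : ℕ) (ha : 1 < a) (hd : 0 < d)
    (had : Nat.gcd a d = 1) :
    (({m : ℕ | ¬ IsRepresentable
        ![a ^ 2, h * a ^ 2 + d, h * a ^ 2 + a * d, h * a ^ 2 + (a + 1) * d] m}.ncard : ℚ)) =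
      (2 / 3) * h * a ^ 3 + (1 / 2) * ((d : ℚ) - h - 1) * a ^ 2
        - (1 / 6) * h * a + (1 / 2) * (1 - (d : ℚ)) := by
  have ha0 : 0 < a := by omega
  have hcop : d.Coprime (a ^ 2) := (Nat.coprime_comm.1 had).pow_right 2
  have hw : Set.BijOn (fun N => apery a h d N % a ^ 2) (range (a ^ 2)) (range (a ^ 2)) :=
    (Nat.bijOn_mul_mod_range hcop).congr fun N _ => (apery_mod a h d N).symm
  have hcount : {m | ¬ IsRepresentable
      ![a ^ 2, h * a ^ 2 + d, h * a ^ 2 + a * d, h * a ^ 2 + (a + 1) * d] m}.ncard =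
      h * ∑ q ∈ range a, ∑ r ∈ range a, max q r + ∑ N ∈ range (a ^ 2), d * N / a ^ 2 := by
    simp_rw [isRepresentable_iff ha0]
    rw [ncard_setOf_not_exists_modEq_le (by positivity) hw, sum_congr rfl fun N _ =>
      apery_div ha0 h d N, sum_add_distrib, ← mul_sum, pow_two a,
      sum_range_mul_div_mod (fun q r => max q r)]
  have hmax := sum_range_sum_range_max_mul_six a
  have hfloor := Nat.sum_range_mul_div_mul_two hcop
  have hM : 1 ≤ a ^ 2 := Nat.one_le_pow _ _ ha0
  rw [hcount]
  generalize ∑ q ∈ range a, ∑ r ∈ range a, max q r = S at hmax ⊢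
  generalize ∑ N ∈ range (a ^ 2), d * N / a ^ 2 = T at hfloor ⊢
  qify [ha0, hd, hM] at hmax hfloor
  push_cast
  linear_combination (h / 6 : ℚ) * hmax + (1 / 2 : ℚ) * hfloor

/-- For `A = (a², ha²+d, ha²+ad, ha²+(a+1)d)` with `a > 1`, `h, d ≥ 1` and
`gcd(a, d) = 1`: `n(A) = (2/3)ha³ + (1/2)(d-h-1)a² - (1/6)ha + (1/2)(1-d)`. -/
theorem stmt_14 (a h d : ℕ) (ha : 1 < a) (hh : 0 < h) (hd : 0 < d)
    (had : Nat.gcd a d = 1) :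
    (({m : ℕ | ¬ IsRepresentable
        ![a ^ 2, h * a ^ 2 + d, h * a ^ 2 + a * d, h * a ^ 2 + (a + 1) * d] m}.ncard : ℚ)) =
      (2 / 3) * h * a ^ 3 + (1 / 2) * ((d : ℚ) - h - 1) * a ^ 2
        - (1 / 6) * h * a + (1 / 2) * (1 - (d : ℚ)) :=
  stmt_14_general a h d ha hd had
end

section
/- Let a ≥ 2 and let h, d be positive integers with gcd(a, d) = 1 and ha − d > 1, and let A = (a, ha−d, ha+d). Then g(A) = max{ ⌊(ha−d)/(2h)⌋·(ha+d) − a, (a − ⌈(ha−d)/(2h)⌉)·(ha−d) − a }. -/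
lemma rep_iff3 {a b c m : ℕ} :
    IsRepresentable ![a, b, c] m ↔ ∃ x y z : ℕ, m = a * x + b * y + c * z := by
  constructor
  · rintro ⟨x, hx⟩
    exact ⟨x 0, x 1, x 2, by simpa [Fin.sum_univ_three] using hx⟩
  · rintro ⟨x, y, z, hx⟩
    exact ⟨![x, y, z], by simpa [Fin.sum_univ_three] using hx⟩

lemma no_rep_aux (a h d : ℕ) (x y z m : ℕ) (cs : ℤ)
    (ha2 : 2 ≤ a) (hcop : Nat.Coprime a d)
    (hcs1 : 1 ≤ cs) (hcsa : cs ≤ (a : ℤ) - 1)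
    (h1 : (m : ℤ) + a ≤ cs * ((h : ℤ) * a + d))
    (h2 : (m : ℤ) + a ≤ ((a : ℤ) - cs) * ((h : ℤ) * a - d))
    (hcong : (a : ℤ) ∣ (m : ℤ) - d * cs)
    (hx : (m : ℤ) = a * x + ((h : ℤ) * a - d) * y + ((h : ℤ) * a + d) * z) :
    False := by
  have hdk : (a : ℤ) ∣ (m : ℤ) - d * ((z : ℤ) - y) :=
    ⟨(x : ℤ) + h * y + h * z, by rw [hx]; ring⟩
  have hdvd : (a : ℤ) ∣ (d : ℤ) * (((z : ℤ) - y) - cs) := by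
    have heq : (d : ℤ) * (((z : ℤ) - y) - cs)
        = ((m : ℤ) - d * cs) - ((m : ℤ) - d * ((z : ℤ) - y)) := by ring
    rw [heq]; exact dvd_sub hcong hdk
  have hco : IsCoprime (a : ℤ) (d : ℤ) := by
    rw [Int.isCoprime_iff_gcd_eq_one, Int.gcd_natCast_natCast]; exact hcop
  obtain ⟨t, ht⟩ := hco.dvd_of_dvd_mul_left hdvd
  have ha0 : (0 : ℤ) < a := by exact_mod_cast (by omega : 0 < a)
  have hy0 : (0 : ℤ) ≤ y := Int.natCast_nonneg y
  have hz0 : (0 : ℤ) ≤ z := Int.natCast_nonneg z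
  have hx0 : (0 : ℤ) ≤ x := Int.natCast_nonneg x
  have hha : (0 : ℤ) ≤ (h : ℤ) * a := by positivity
  have hC0 : (0 : ℤ) ≤ (h : ℤ) * a + d := by positivity
  have hB0 : (0 : ℤ) ≤ (h : ℤ) * a - d := by nlinarith [h2, Int.natCast_nonneg m]
  rcases le_or_gt 0 t with ht0 | ht0
  · have hkcs : cs ≤ (z : ℤ) - y := by nlinarith [mul_nonneg ha0.le ht0]
    have hyz : (z : ℤ) - y ≤ (y : ℤ) + z := by omega
    have e1 : (h : ℤ) * a * ((z : ℤ) - y) ≤ (h : ℤ) * a * ((y : ℤ) + z) :=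
      mul_le_mul_of_nonneg_left hyz hha
    have e2 : ((h : ℤ) * a + d) * cs ≤ ((h : ℤ) * a + d) * ((z : ℤ) - y) :=
      mul_le_mul_of_nonneg_left hkcs hC0
    linarith [mul_nonneg ha0.le hx0]
  · have hkcs : (z : ℤ) - y ≤ cs - a := by
      nlinarith [mul_le_mul_of_nonneg_left (by omega : t ≤ -1) ha0.le]
    have hyz : -((z : ℤ) - y) ≤ (y : ℤ) + z := by omega
    have e1 : (h : ℤ) * a * (-((z : ℤ) - y)) ≤ (h : ℤ) * a * ((y : ℤ) + z) :=
      mul_le_mul_of_nonneg_left hyz hha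
    have e2 : ((h : ℤ) * a - d) * ((a : ℤ) - cs) ≤ ((h : ℤ) * a - d) * (-((z : ℤ) - y)) :=
      mul_le_mul_of_nonneg_left (by omega) hB0
    linarith [mul_nonneg ha0.le hx0]

lemma rep_aux (a h d m : ℕ) (c0 : ℕ) (c1 : ℤ)
    (ha2 : 2 ≤ a) (hdle : d ≤ h * a)
    (hcop : Nat.Coprime d a)
    (hc01 : c1 ≤ (c0 : ℤ) + 1)
    (hm : max ((c0 : ℤ) * ((h : ℤ) * a + d) - a)
        (((a : ℤ) - c1) * ((h : ℤ) * a - d) - a) < (m : ℤ)) :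
    ∃ x y z : ℕ, m = a * x + (h * a - d) * y + (h * a + d) * z := by
  haveI : NeZero a := ⟨by omega⟩
  have ha0 : (0 : ℤ) < a := by exact_mod_cast (by omega : 0 < a)
  set u : (ZMod a)ˣ := ZMod.unitOfCoprime d hcop with hu
  set cc : ℕ := ((m : ZMod a) * ((u⁻¹ : (ZMod a)ˣ) : ZMod a)).val with hcc
  have hcclt : cc < a := ZMod.val_lt _
  have key : ((d * cc : ℕ) : ZMod a) = (m : ZMod a) := by
    push_cast
    rw [hcc, ZMod.natCast_val, ZMod.cast_id]
    rw [← ZMod.coe_unitOfCoprime d hcop, ← hu, mul_comm ((m : ZMod a)) _,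
      ← mul_assoc, Units.mul_inv, one_mul]
  have hdvd : (a : ℤ) ∣ (m : ℤ) - d * cc := by
    have := (ZMod.natCast_eq_natCast_iff _ _ _).mp key
    exact_mod_cast Nat.ModEq.dvd this
  have hC0 : (0 : ℤ) ≤ (h : ℤ) * a + d := by positivity
  have hB0 : (0 : ℤ) ≤ (h : ℤ) * a - d := by
    have : ((d : ℤ)) ≤ (h : ℤ) * a := by exact_mod_cast hdle
    linarith
  rcases le_or_gt cc c0 with hcase | hcase
  · -- use z := cc
    have hle : (cc : ℤ) * ((h : ℤ) * a + d) ≤ (c0 : ℤ) * ((h : ℤ) * a + d) :=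
      mul_le_mul_of_nonneg_right (by exact_mod_cast hcase) hC0
    have hdvd2 : (a : ℤ) ∣ (m : ℤ) - cc * ((h : ℤ) * a + d) := by
      have heq : (m : ℤ) - cc * ((h : ℤ) * a + d)
          = ((m : ℤ) - d * cc) - a * (cc * h) := by ring
      rw [heq]; exact dvd_sub hdvd ⟨cc * h, rfl⟩
    obtain ⟨t, ht⟩ := hdvd2
    have ht0 : 0 ≤ t := by
      by_contra hcon
      push_neg at hcon
      have : (a : ℤ) * t ≤ a * (-1) := mul_le_mul_of_nonneg_left (by omega) ha0.le
      have h1 := le_max_left ((c0 : ℤ) * ((h : ℤ) * a + d) - a)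
        (((a : ℤ) - c1) * ((h : ℤ) * a - d) - a)
      linarith
    refine ⟨t.toNat, 0, cc, ?_⟩
    have hfin : (m : ℤ) = a * (t.toNat : ℤ) + ((h * a - d : ℕ) : ℤ) * 0
        + ((h * a + d : ℕ) : ℤ) * cc := by
      rw [Int.toNat_of_nonneg ht0]
      push_cast
      linarith [ht]
    exact_mod_cast hfin
  · -- use y := a - cc
    have hc1cc : c1 ≤ (cc : ℤ) := by
      have : (c0 : ℤ) + 1 ≤ cc := by exact_mod_cast hcase
      linarith
    have hle : ((a : ℤ) - cc) * ((h : ℤ) * a - d) ≤ ((a : ℤ) - c1) * ((h : ℤ) * a - d) :=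
      mul_le_mul_of_nonneg_right (by linarith) hB0
    have hdvd2 : (a : ℤ) ∣ (m : ℤ) - ((a : ℤ) - cc) * ((h : ℤ) * a - d) := by
      have heq : (m : ℤ) - ((a : ℤ) - cc) * ((h : ℤ) * a - d)
          = ((m : ℤ) - d * cc) + a * ((d : ℤ) + h * cc - h * a) := by ring
      rw [heq]; exact dvd_add hdvd ⟨(d : ℤ) + h * cc - h * a, rfl⟩
    obtain ⟨t, ht⟩ := hdvd2
    have ht0 : 0 ≤ t := by
      by_contra hcon
      push_neg at hcon
      have : (a : ℤ) * t ≤ a * (-1) := mul_le_mul_of_nonneg_left (by omega) ha0.le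
      have h1 := le_max_right ((c0 : ℤ) * ((h : ℤ) * a + d) - a)
        (((a : ℤ) - c1) * ((h : ℤ) * a - d) - a)
      linarith
    refine ⟨t.toNat, a - cc, 0, ?_⟩
    have hfin : (m : ℤ) = a * (t.toNat : ℤ) + ((h * a - d : ℕ) : ℤ) * ((a - cc : ℕ) : ℤ)
        + ((h * a + d : ℕ) : ℤ) * 0 := by
      rw [Int.toNat_of_nonneg ht0]
      push_cast [hdle, hcclt.le]
      linarith [ht]
    exact_mod_cast hfin

set_option maxHeartbeats 1000000 in
lemma main_aux (a h d g : ℕ) (c0 : ℕ) (c1 : ℤ)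
    (ha : 2 ≤ a) (hcop : Nat.Coprime a d) (hdle : d ≤ h * a)
    (F1Z : 2 * (h : ℤ) * c0 ≤ (h : ℤ) * a - d)
    (G1Z : (h : ℤ) * a - d ≤ 2 * h * c1)
    (G2 : c1 ≤ (c0 : ℤ) + 1)
    (G3 : 1 ≤ c1) (G4 : c1 ≤ (a : ℤ) - 1) (G0 : (c0 : ℤ) ≤ c1)
    (hg : IsGreatest {m : ℕ | ¬ IsRepresentable ![a, h * a - d, h * a + d] m} g) :
    (g : ℤ) = max ((c0 : ℤ) * ((h : ℤ) * a + d) - a)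
      (((a : ℤ) - c1) * ((h : ℤ) * a - d) - a) := by
  have ha0 : (0 : ℤ) < a := by exact_mod_cast (by omega : 0 < a)
  set M : ℤ := max ((c0 : ℤ) * ((h : ℤ) * a + d) - a)
      (((a : ℤ) - c1) * ((h : ℤ) * a - d) - a) with hMdef
  have hub : (g : ℤ) ≤ M := by
    by_contra hcon
    push_neg at hcon
    exact hg.1 (rep_iff3.mpr (rep_aux a h d g c0 c1 ha hdle hcop.symm G2 hcon))
  have hM0 : (0 : ℤ) ≤ M := le_trans (Int.natCast_nonneg g) hub
  have hmZ : (M.toNat : ℤ) = M := Int.toNat_of_nonneg hM0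
  have repB : ¬ IsRepresentable ![a, h * a - d, h * a + d] M.toNat := by
    intro hrep
    obtain ⟨x, y, z, hxyz⟩ := rep_iff3.mp hrep
    have hx : ((M.toNat : ℕ) : ℤ) = a * x + ((h : ℤ) * a - d) * y + ((h : ℤ) * a + d) * z := by
      have h1 := congrArg (Nat.cast : ℕ → ℤ) hxyz
      push_cast [hdle] at h1
      exact_mod_cast h1
    rcases max_cases ((c0 : ℤ) * ((h : ℤ) * a + d) - a)
        (((a : ℤ) - c1) * ((h : ℤ) * a - d) - a) with ⟨hMe, hge⟩ | ⟨hMe, hlt⟩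
    · have hma : (M.toNat : ℤ) + a = (c0 : ℤ) * ((h : ℤ) * a + d) := by
        rw [hmZ, hMdef, hMe]; ring
      have hcs1 : 1 ≤ (c0 : ℤ) := by
        by_contra hcon
        push_neg at hcon
        have hc00 : (c0 : ℤ) = 0 := by
          have := Int.natCast_nonneg c0
          omega
        rw [hc00] at hma
        have := Int.natCast_nonneg M.toNat
        linarith
      have hmin : (c0 : ℤ) * ((h : ℤ) * a + d) ≤ ((a : ℤ) - c0) * ((h : ℤ) * a - d) := by
        have hp : (0 : ℤ) ≤ (a : ℤ) * (((h : ℤ) * a - d) - 2 * h * c0) :=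
          mul_nonneg ha0.le (by linarith)
        nlinarith [hp]
      exact no_rep_aux a h d x y z M.toNat (c0 : ℤ) ha hcop hcs1 (by linarith)
        (le_of_eq hma) (by linarith)
        ⟨(h : ℤ) * c0 - 1, by linarith⟩ hx
    · have hma : (M.toNat : ℤ) + a = ((a : ℤ) - c1) * ((h : ℤ) * a - d) := by
        rw [hmZ, hMdef, hMe]; ring
      have hmin : ((a : ℤ) - c1) * ((h : ℤ) * a - d) ≤ c1 * ((h : ℤ) * a + d) := by
        have hp : (0 : ℤ) ≤ (a : ℤ) * (2 * h * c1 - ((h : ℤ) * a - d)) :=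
          mul_nonneg ha0.le (by linarith)
        nlinarith [hp]
      exact no_rep_aux a h d x y z M.toNat c1 ha hcop G3 G4
        (by linarith) (le_of_eq hma)
        ⟨(h : ℤ) * a - d - h * c1 - 1, by linarith⟩ hx
  have hlb : M ≤ (g : ℤ) := by
    have h2 : (M.toNat : ℤ) ≤ g := by exact_mod_cast hg.2 repB
    rwa [hmZ] at h2
  exact le_antisymm hub hlb

/-- For `A = (a, ha-d, ha+d)` with `a ≥ 2`, `h, d ≥ 1`, `gcd(a, d) = 1` and
`ha - d > 1`:
`g(A) = max{ ⌊(ha-d)/(2h)⌋·(ha+d) - a, (a - ⌈(ha-d)/(2h)⌉)·(ha-d) - a }`. -/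
theorem stmt_15 (a h d : ℕ) (ha : 2 ≤ a) (hh : 0 < h) (hd : 0 < d)
    (had : Nat.gcd a d = 1) (hda : d < h * a) (hhad : 1 < h * a - d)
    (g : ℕ)
    (hg : IsGreatest {m : ℕ | ¬ IsRepresentable ![a, h * a - d, h * a + d] m} g) :
    (g : ℤ) = max
      ((((h * a - d) / (2 * h) : ℕ) : ℤ) * ((h : ℤ) * a + d) - a)
      (((a : ℤ) - ⌈(((h * a - d : ℕ) : ℚ)) / (2 * (h : ℚ))⌉)
        * ((h : ℤ) * a - d) - a) := by
  have hdle : d ≤ h * a := hda.le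
  have h2h : 0 < 2 * h := by omega
  have h2hQ : (0 : ℚ) < 2 * (h : ℚ) := by positivity
  have hbQ : (0 : ℚ) < ((h * a - d : ℕ) : ℚ) := by
    exact_mod_cast (by omega : 0 < h * a - d)
  have hdm := Nat.div_add_mod (h * a - d) (2 * h)
  have hml := Nat.mod_lt (h * a - d) h2h
  set q : ℕ := (h * a - d) / (2 * h) with hq
  set c1 : ℤ := ⌈(((h * a - d : ℕ) : ℚ)) / (2 * (h : ℚ))⌉ with hc1
  -- ℕ facts about q
  have F1 : 2 * h * q ≤ h * a - d := by omega
  have F2 : h * a - d < 2 * h * q + 2 * h := by omega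
  -- casts
  have hbZ : ((h * a - d : ℕ) : ℤ) = (h : ℤ) * a - d := by
    push_cast [hdle]; ring
  have F1Z : 2 * (h : ℤ) * (q : ℤ) ≤ (h : ℤ) * a - d := by
    rw [← hbZ]; exact_mod_cast F1
  have F2Q : ((h * a - d : ℕ) : ℚ) < 2 * (h : ℚ) * (q : ℚ) + 2 * h := by
    have := Nat.cast_lt (α := ℚ) |>.mpr F2
    push_cast at this
    linarith
  have F1Q : 2 * (h : ℚ) * (q : ℚ) ≤ ((h * a - d : ℕ) : ℚ) := by
    have := Nat.cast_le (α := ℚ) |>.mpr F1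
    push_cast at this
    linarith
  -- c1 facts
  have G1Z : (h : ℤ) * a - d ≤ 2 * h * c1 := by
    have h1 := Int.le_ceil ((((h * a - d : ℕ) : ℚ)) / (2 * (h : ℚ)))
    rw [← hc1] at h1
    have h2 : ((h * a - d : ℕ) : ℚ) ≤ (c1 : ℚ) * (2 * (h : ℚ)) := (div_le_iff₀ h2hQ).mp h1
    rw [← hbZ]
    exact_mod_cast (by push_cast; linarith :
      (((h * a - d : ℕ) : ℤ) : ℚ) ≤ ((2 * (h : ℤ) * c1 : ℤ) : ℚ))
  have G2 : c1 ≤ (q : ℤ) + 1 := by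
    rw [hc1, Int.ceil_le, div_le_iff₀ h2hQ]
    push_cast
    linarith
  have G3 : 1 ≤ c1 := by
    have h0 : (0 : ℤ) < c1 := by
      rw [hc1, Int.lt_ceil]
      push_cast
      positivity
    omega
  have G4 : c1 ≤ (a : ℤ) - 1 := by
    rw [hc1, Int.ceil_le, div_le_iff₀ h2hQ]
    have h2ha : 2 * h ≤ h * a := by
      calc 2 * h = h * 2 := by ring
      _ ≤ h * a := Nat.mul_le_mul_left h ha
    have hbb : ((h * a - d : ℕ) : ℚ) ≤ (h : ℚ) * a - d := by
      have := Nat.cast_le (α := ℚ) |>.mpr (le_refl (h * a - d))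
      push_cast [Nat.cast_sub hdle] at this ⊢
      linarith
    have hhaQ : 2 * (h : ℚ) ≤ (h : ℚ) * a := by exact_mod_cast h2ha
    have hdQ : (0 : ℚ) < d := by exact_mod_cast hd
    push_cast
    nlinarith
  have G0 : (q : ℤ) ≤ c1 := by
    have hfl : ((q : ℚ)) ≤ ((h * a - d : ℕ) : ℚ) / (2 * (h : ℚ)) := by
      rw [le_div_iff₀ h2hQ]
      linarith
    have h5 := hfl.trans (Int.le_ceil _)
    rw [← hc1] at h5
    exact_mod_cast h5
  exact main_aux a h d g q c1 ha had hdle F1Z G1Z G2 G3 G4 G0 hg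
end

section
/- Let A = (a, ha+d, ha+2d, …, ha+kd) where a, h, d, k are positive integers, gcd(a, d) = 1 and 1 ≤ k ≤ a−1. Then g(A) = ha·(⌊(a−2)/k⌋ + 1) + (d−1)(a−1) − 1. -/
theorem isRepresentable_iff_mem_closure {n : ℕ} (A : Fin n → ℕ) (m : ℕ) :
    IsRepresentable A m ↔ m ∈ AddSubmonoid.closure (Set.range A) := by
  simp only [AddSubmonoid.mem_closure_range_iff_of_fintype, smul_eq_mul, IsRepresentable, mul_comm]

def almostArithSeq (a h d k : ℕ) : Fin (k + 1) → ℕ :=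
  Fin.cons a fun i : Fin k => h * a + d * (i.val + 1)

namespace almostArithSeq

variable {a h d k : ℕ}

theorem mul_add_mul_mem_closure {t s : ℕ} (hts : t ≤ s) (hst : s ≤ k * t) :
    h * a * t + d * s ∈ AddSubmonoid.closure (Set.range (almostArithSeq a h d k)) := by
  induction t generalizing s with
  | zero => simp_all
  | succ t ih =>
    obtain ⟨c, s', rfl, hc, hck, hts', hs'k⟩ :
        ∃ c s', s = c + s' ∧ 1 ≤ c ∧ c ≤ k ∧ t ≤ s' ∧ s' ≤ k * t := by
      have hk : 0 < k := Nat.pos_of_ne_zero (by rintro rfl; omega)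
      have := mul_add_one k t
      have := Nat.le_mul_of_pos_left t hk
      exact ⟨min k (s - t), s - min k (s - t), by omega, by omega, min_le_left _ _, by omega,
        by omega⟩
    have hgen : h * a + d * c ∈ AddSubmonoid.closure (Set.range (almostArithSeq a h d k)) := by
      refine AddSubmonoid.subset_closure ⟨(⟨c - 1, by omega⟩ : Fin k).succ, ?_⟩
      simp only [almostArithSeq, Fin.cons_succ]
      congr 2
      omega
    convert AddSubmonoid.add_mem _ hgen (ih hts' hs'k) using 1
    ring

theorem isRepresentable_iff {m : ℕ} :
    IsRepresentable (almostArithSeq a h d k) m ↔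
      ∃ x₀ t s, t ≤ s ∧ s ≤ k * t ∧ m = a * x₀ + h * a * t + d * s := by
  constructor
  · rintro ⟨x, rfl⟩
    refine ⟨x 0, ∑ i : Fin k, x i.succ, ∑ i : Fin k, (i.val + 1) * x i.succ, ?_, ?_, ?_⟩
    · exact Finset.sum_le_sum fun i _ => Nat.le_mul_of_pos_left _ i.val.succ_pos
    · rw [Finset.mul_sum]
      exact Finset.sum_le_sum fun i _ => Nat.mul_le_mul_right _ i.isLt
    · simp only [Fin.sum_univ_succ, almostArithSeq, Fin.cons_zero, Fin.cons_succ, Finset.mul_sum,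
        ← Finset.sum_add_distrib, add_mul, mul_comm a, mul_assoc, add_assoc]
  · rintro ⟨x₀, t, s, hts, hst, rfl⟩
    rw [isRepresentable_iff_mem_closure, add_assoc]
    refine AddSubmonoid.add_mem _ ?_ (mul_add_mul_mem_closure hts hst)
    rw [mul_comm, ← smul_eq_mul]
    exact AddSubmonoid.nsmul_mem _ (AddSubmonoid.subset_closure (Set.mem_range_self 0)) _

theorem not_isRepresentable (ha : 0 < a) (hk : 0 < k) (had : Nat.Coprime a d) {N : ℕ}
    (hN : N + a = h * a * ((a - 1) ⌈/⌉ k) + d * (a - 1)) :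
    ¬ IsRepresentable (almostArithSeq a h d k) N := by
  rw [isRepresentable_iff]
  rintro ⟨x₀, t, s, -, hst, hNeq⟩
  have hmod : d * s ≡ d * (a - 1) [MOD a] :=
    calc d * s ≡ d * s + a * (x₀ + h * t + 1) [MOD a] := (Nat.add_mul_mod_self_left _ _ _).symm
      _ = d * (a - 1) + a * (h * ((a - 1) ⌈/⌉ k)) := by rw [hNeq] at hN; linarith
      _ ≡ d * (a - 1) [MOD a] := Nat.add_mul_mod_self_left _ _ _
  have hs : a - 1 ≤ s := by
    have := (hmod.cancel_left_of_coprime had).symm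
    rw [Nat.ModEq, Nat.mod_eq_of_lt (Nat.sub_lt ha one_pos)] at this
    exact this ▸ Nat.mod_le s a
  have ht : (a - 1) ⌈/⌉ k ≤ t := (ceilDiv_le_iff_le_mul hk).2 (hs.trans hst)
  have := Nat.mul_le_mul_left (h * a) ht
  have := Nat.mul_le_mul_left d hs
  omega

theorem isRepresentable_of_lt (ha : 0 < a) (hk : 0 < k) (had : Nat.Coprime a d) {N m : ℕ}
    (hN : N + a = h * a * ((a - 1) ⌈/⌉ k) + d * (a - 1)) (hm : N < m) :
    IsRepresentable (almostArithSeq a h d k) m := by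
  obtain ⟨r, hra, hr⟩ := Nat.exists_mul_mod_eq_of_coprime m had.symm ha.ne'
  set t := r ⌈/⌉ k
  have htr : t ≤ r := (ceilDiv_le_iff_le_mul hk).2 (Nat.le_mul_of_pos_left r hk)
  have hrt : r ≤ k * t := (ceilDiv_le_iff_le_mul hk).1 le_rfl
  have hta : t ≤ (a - 1) ⌈/⌉ k := (gc_mul_ceilDiv hk).monotone_l (Nat.le_sub_one_of_lt hra)
  have hmod : d * r + a * (h * t) ≡ m [MOD a] := (Nat.add_mul_mod_self_left _ _ _).trans hr
  have hlt : d * r + a * (h * t) < m + a := by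
    have : h * a * t + d * r ≤ h * a * ((a - 1) ⌈/⌉ k) + d * (a - 1) := by
      gcongr
      omega
    linarith
  obtain ⟨x₀, hx₀⟩ := (Nat.modEq_iff_dvd' (hmod.le_of_lt_add hlt)).1 hmod
  rw [isRepresentable_iff]
  refine ⟨x₀, t, r, htr, hrt, ?_⟩
  have := Nat.sub_add_cancel (hmod.le_of_lt_add hlt)
  linarith

theorem isGreatest_not_isRepresentable (ha : 0 < a) (hk : 0 < k) (had : Nat.Coprime a d)
    {N : ℕ} (hN : N + a = h * a * ((a - 1) ⌈/⌉ k) + d * (a - 1)) :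
    IsGreatest {m | ¬ IsRepresentable (almostArithSeq a h d k) m} N :=
  ⟨not_isRepresentable ha hk had hN, fun _ hm =>
    not_lt.1 fun hlt => hm (isRepresentable_of_lt ha hk had hN hlt)⟩

end almostArithSeq

theorem stmt_17_general (a h d k : ℕ) (hh : 0 < h)
    (had : Nat.gcd a d = 1) (hk1 : 1 ≤ k) (hka : k ≤ a - 1)
    (g : ℕ)
    (hg : IsGreatest {m : ℕ | ¬ IsRepresentable
      (Fin.cons a (fun i : Fin k => h * a + d * (i.val + 1))) m} g) :
    (g : ℤ) = h * a * ((((a - 2) / k : ℕ) : ℤ) + 1)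
      + ((d : ℤ) - 1) * ((a : ℤ) - 1) - 1 := by
  have hceil : (a - 1) ⌈/⌉ k = (a - 2) / k + 1 := by
    rw [Nat.ceilDiv_eq_add_pred_div, show a - 1 + k - 1 = a - 2 + k by omega,
      Nat.add_div_right _ hk1]
  have hle : a ≤ h * a * ((a - 2) / k + 1) :=
    le_mul_of_le_of_one_le (Nat.le_mul_of_pos_left a hh) (Nat.le_add_left 1 _)
  obtain ⟨N, hN⟩ : ∃ N, N + a = h * a * ((a - 2) / k + 1) + d * (a - 1) :=
    ⟨_, Nat.sub_add_cancel (hle.trans (Nat.le_add_right _ _))⟩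
  obtain rfl := hg.unique
    (almostArithSeq.isGreatest_not_isRepresentable (by omega) hk1 had (hceil ▸ hN))
  generalize (a - 2) / k = q at hN ⊢
  zify [show 1 ≤ a by omega] at hN
  linarith

/-- For the almost arithmetic sequence `A = (a, ha+d, ha+2d, …, ha+kd)` with
`a, h, d, k ≥ 1`, `gcd(a, d) = 1` and `1 ≤ k ≤ a-1`:
`g(A) = ha·(⌊(a-2)/k⌋ + 1) + (d-1)(a-1) - 1`. -/
theorem stmt_17 (a h d k : ℕ) (ha : 0 < a) (hh : 0 < h) (hd : 0 < d)
    (had : Nat.gcd a d = 1) (hk1 : 1 ≤ k) (hka : k ≤ a - 1)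
    (g : ℕ)
    (hg : IsGreatest {m : ℕ | ¬ IsRepresentable
      (Fin.cons a (fun i : Fin k => h * a + d * (i.val + 1))) m} g) :
    (g : ℤ) = h * a * ((((a - 2) / k : ℕ) : ℤ) + 1)
      + ((d : ℤ) - 1) * ((a : ℤ) - 1) - 1 :=
  stmt_17_general a h d k hh had hk1 hka g hg
end
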